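/- arXiv:1608.08194 — 9 statements merged into one kernel-verified Lean document; each statement's English description precedes it below -/
import Mathlib

section
/- Let n ≥ 1, let A be a real symmetric positive definite n×n matrix all of whose eigenvalues are bounded below by λ > 0, and let B be a real n×n matrix whose symmetric part B^s = (B + Bᵀ)/2 has all eigenvalues bounded below by γ > 0. Then every eigenvalue μ ∈ ℂ of the product matrix AB satisfies Re μ ≥ γλ. -/
open Matrix ComplexConjugate
open scoped ComplexOrder

/-! If `A B z = μ z` with `z ≠ 0`, put `w = B z`. Then `w* A w = μ · conj (z* B z)`, where
`w* A w ≥ λ ‖w‖²` is real and `Re (z* B z) ≥ γ ‖z‖² > 0`, so by Cauchy–Schwarz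
`Re μ · |z* B z|² = (w* A w) · Re (z* B z) ≥ γ λ ‖z‖² ‖w‖² ≥ γ λ |z* B z|²`. -/

namespace Matrix

variable {n : Type*} [Fintype n]

theorem exists_mulVec_eq_smul_of_mem_spectrum {K : Type*} [Field K] [DecidableEq n]
    {M : Matrix n n K} {μ : K} (h : μ ∈ spectrum K M) : ∃ v ≠ 0, M *ᵥ v = μ • v := by
  rw [← spectrum_toLin', ← Module.End.hasEigenvalue_iff_mem_spectrum] at h
  obtain ⟨v, hv⟩ := h.exists_hasEigenvector
  exact ⟨v, hv.2, by simpa using Module.End.mem_eigenspace_iff.1 hv.1⟩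

theorem dotProduct_mulVec_half_add_transpose {R : Type*} [Field R] [NeZero (2 : R)]
    (B : Matrix n n R) (x : n → R) :
    x ⬝ᵥ (((2 : R)⁻¹ • (B + Bᵀ)) *ᵥ x) = x ⬝ᵥ (B *ᵥ x) := by
  rw [smul_mulVec, add_mulVec, dotProduct_smul, dotProduct_add, dotProduct_mulVec x Bᵀ,
    vecMul_transpose, dotProduct_comm (B *ᵥ x), smul_eq_mul, ← two_mul,
    inv_mul_cancel_left₀ two_ne_zero]

theorem re_star_dotProduct_map_ofReal_mulVec (M : Matrix n n ℝ) (u : n → ℂ) :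
    (star u ⬝ᵥ (M.map Complex.ofReal *ᵥ u)).re
      = (fun i => (u i).re) ⬝ᵥ (M *ᵥ fun i => (u i).re)
        + (fun i => (u i).im) ⬝ᵥ (M *ᵥ fun i => (u i).im) := by
  simp only [dotProduct, mulVec, Pi.star_apply, map_apply, Complex.re_sum,
    Finset.mul_sum, ← Finset.sum_add_distrib]
  refine Finset.sum_congr rfl fun i _ => Finset.sum_congr rfl fun j _ => ?_
  simp [Complex.mul_re, Complex.mul_im]

theorem re_star_dotProduct_self (u : n → ℂ) :
    (star u ⬝ᵥ u).re
      = (fun i => (u i).re) ⬝ᵥ (fun i => (u i).re)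
        + (fun i => (u i).im) ⬝ᵥ (fun i => (u i).im) := by
  classical
  simpa using re_star_dotProduct_map_ofReal_mulVec (1 : Matrix n n ℝ) u

theorem mul_re_star_dotProduct_self_le {M : Matrix n n ℝ} {c : ℝ}
    (h : ∀ x : n → ℝ, c * (x ⬝ᵥ x) ≤ x ⬝ᵥ (M *ᵥ x)) (u : n → ℂ) :
    c * (star u ⬝ᵥ u).re ≤ (star u ⬝ᵥ (M.map Complex.ofReal *ᵥ u)).re := by
  rw [re_star_dotProduct_self, re_star_dotProduct_map_ofReal_mulVec]
  linarith [h fun i => (u i).re, h fun i => (u i).im]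

theorem norm_star_dotProduct_sq_le {𝕜 : Type*} [RCLike 𝕜] (z w : n → 𝕜) :
    ‖star z ⬝ᵥ w‖ ^ 2 ≤ RCLike.re (star z ⬝ᵥ z) * RCLike.re (star w ⬝ᵥ w) := by
  have := inner_mul_inner_self_le (𝕜 := 𝕜) (WithLp.toLp 2 z) (WithLp.toLp 2 w)
  simp only [EuclideanSpace.inner_toLp_toLp, dotProduct_comm _ (star _)] at this
  rwa [star_dotProduct w, norm_star, ← sq] at this

end Matrix

theorem Complex.mul_le_re_of_eq_mul_conj {μ a c : ℂ} {Z W lam γ : ℝ} (h : a = μ * conj c)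
    (ha : a.im = 0) (hlam : 0 ≤ lam) (hγ : 0 < γ) (hZ : 0 < Z) (hW : 0 ≤ W)
    (haW : lam * W ≤ a.re) (hcZ : γ * Z ≤ c.re) (hc : normSq c ≤ Z * W) :
    γ * lam ≤ μ.re := by
  have hre : μ.re * normSq c = a.re * c.re := by
    have h_re := congrArg re h
    have h_im := congrArg im h
    simp only [mul_re, mul_im, conj_re, conj_im] at h_re h_im
    rw [normSq_apply]
    linear_combination -c.re * h_re + c.im * h_im - c.im * ha
  have hc_pos : 0 < normSq c := normSq_pos.2 fun h0 => by
    simp only [h0, zero_re] at hcZ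
    exact (mul_pos hγ hZ).not_ge hcZ
  refine le_of_mul_le_mul_right ?_ hc_pos
  calc γ * lam * normSq c ≤ γ * lam * (Z * W) := by gcongr
    _ = (lam * W) * (γ * Z) := by ring
    _ ≤ a.re * c.re :=
      mul_le_mul haW hcZ (by positivity) ((by positivity : 0 ≤ lam * W).trans haW)
    _ = μ.re * normSq c := hre.symm

theorem spectrum_re_mul_lower_bound_general
    (n : ℕ) (lam γ : ℝ) (hlam : 0 < lam) (hγ : 0 < γ)
    (A B : Matrix (Fin n) (Fin n) ℝ)
    (hA : A.PosDef)
    (hAlb : ∀ x : Fin n → ℝ, lam * (x ⬝ᵥ x) ≤ x ⬝ᵥ (A *ᵥ x))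
    (hB : ∀ x : Fin n → ℝ, γ * (x ⬝ᵥ x) ≤ x ⬝ᵥ (((2 : ℝ)⁻¹ • (B + Bᵀ)) *ᵥ x)) :
    ∀ μ ∈ spectrum ℂ ((A * B).map Complex.ofReal), γ * lam ≤ μ.re := by
  intro μ hμ
  obtain ⟨z, hz0, hz⟩ := exists_mulVec_eq_smul_of_mem_spectrum hμ
  set w := B.map Complex.ofReal *ᵥ z
  have hAw : A.map Complex.ofReal *ᵥ w = μ • z := by
    have hAB : (A * B).map Complex.ofReal = A.map Complex.ofReal * B.map Complex.ofReal :=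
      Matrix.map_mul (f := Complex.ofRealHom)
    rwa [mulVec_mulVec, ← hAB]
  have hwAw : star w ⬝ᵥ (A.map Complex.ofReal *ᵥ w) = μ * conj (star z ⬝ᵥ w) := by
    rw [hAw, dotProduct_smul, smul_eq_mul, star_dotProduct]
    rfl
  have hwAw_real :=
    (hA.1.map Complex.ofReal fun _ => by simp).im_star_dotProduct_mulVec_self w
  have hZ : 0 < (star z ⬝ᵥ z).re := (Complex.pos_iff.1 (dotProduct_star_self_pos_iff.2 hz0)).1
  have hW : 0 ≤ (star w ⬝ᵥ w).re := Complex.nonneg_iff.1 (dotProduct_star_self_nonneg w) |>.1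
  have hBz := mul_re_star_dotProduct_self_le
    (fun x => dotProduct_mulVec_half_add_transpose B x ▸ hB x) z
  refine Complex.mul_le_re_of_eq_mul_conj hwAw hwAw_real hlam.le hγ hZ hW
    (mul_re_star_dotProduct_self_le hAlb w) hBz ?_
  simpa [Complex.normSq_eq_norm_sq] using norm_star_dotProduct_sq_le z w

/-- If `A` is real symmetric positive definite with all eigenvalues at least
`lam > 0` (i.e. `xᵀAx ≥ lam‖x‖²` for all `x`) and the symmetric part of `B` has all eigenvalues
at least `γ > 0`, then every (complex) eigenvalue `μ` of `A * B` satisfies `Re μ ≥ γ * lam`. -/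
theorem spectrum_re_mul_lower_bound
    (n : ℕ) (hn : 1 ≤ n) (lam γ : ℝ) (hlam : 0 < lam) (hγ : 0 < γ)
    (A B : Matrix (Fin n) (Fin n) ℝ)
    (hA : A.PosDef)
    (hAlb : ∀ x : Fin n → ℝ, lam * (x ⬝ᵥ x) ≤ x ⬝ᵥ (A *ᵥ x))
    (hB : ∀ x : Fin n → ℝ, γ * (x ⬝ᵥ x) ≤ x ⬝ᵥ (((2 : ℝ)⁻¹ • (B + Bᵀ)) *ᵥ x)) :
    ∀ μ ∈ spectrum ℂ ((A * B).map Complex.ofReal), γ * lam ≤ μ.re :=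
  spectrum_re_mul_lower_bound_general n lam γ hlam hγ A B hA hAlb hB
end

section
/- Let n ≥ 1 and let A be an n×n complex matrix whose Hermitian part A^s = (A + Aᴴ)/2 has all eigenvalues bounded below by λ > 0. Then A is invertible, and every eigenvalue of the Hermitian part (A⁻¹ + (A⁻¹)ᴴ)/2 of A⁻¹ is at least λ/‖A‖², where ‖A‖ denotes the ℓ²-operator norm of A. -/
/-!
Write `ℜ` for the Hermitian part and `B = A⁻¹`. The identity `ℜ B = B* (ℜ A) B` turns the
hypothesis `λ ≤ ℜ A` (in the Loewner order) into `λ B* B ≤ ℜ B`, and conjugating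
`A* A ≤ ‖A‖²` by `B` gives `1 ≤ ‖A‖² B* B`; together `λ / ‖A‖² ≤ ℜ B`. For self-adjoint
elements, such order bounds are exactly lower bounds on the spectrum. Invertibility: a kernel
vector `v` of `A` would give `⟪v, (ℜ A) v⟫ = 0`, although `ℜ A ≥ λ > 0` is positive definite.
-/

open Matrix
open scoped Matrix.Norms.L2Operator

open scoped ComplexStarModule MatrixOrder ComplexOrder

theorem coe_realPart_eq_two_inv_smul {A : Type*} [AddCommGroup A] [Module ℂ A] [StarAddMonoid A]
    [StarModule ℂ A] (a : A) : (ℜ a : A) = (2 : ℂ)⁻¹ • (a + star a) := by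
  rw [realPart_apply_coe, ← Complex.coe_smul]
  norm_num

theorem Units.realPart_inv {A : Type*} [Ring A] [StarRing A] [Algebra ℂ A] [StarModule ℂ A]
    (u : Aˣ) : (ℜ (↑u⁻¹ : A) : A) = star (↑u⁻¹ : A) * ℜ (u : A) * ↑u⁻¹ := by
  simp only [realPart_apply_coe, mul_smul_comm, smul_mul_assoc, mul_add, add_mul, ← star_mul,
    Units.mul_inv, mul_assoc, star_one, one_mul, mul_one, add_comm]

section CStarAlgebra

variable {A : Type*} [CStarAlgebra A] [PartialOrder A] [StarOrderedRing A]

theorem IsSelfAdjoint.algebraMap_le_iff_forall_le_re {a : A} (ha : IsSelfAdjoint a) (c : ℝ) :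
    algebraMap ℝ A c ≤ a ↔ ∀ μ ∈ spectrum ℂ a, c ≤ μ.re := by
  rw [algebraMap_le_iff_le_spectrum ha]
  constructor
  · intro h μ hμ
    rw [ha.mem_spectrum_eq_re hμ] at hμ
    exact h _ ((spectrum.algebraMap_mem_iff ℂ).mp hμ)
  · intro h x hx
    simpa using h x ((spectrum.algebraMap_mem_iff ℂ).mpr hx)

theorem Units.algebraMap_inv_norm_sq_le_star_inv_mul_inv (u : Aˣ) :
    algebraMap ℝ A (‖(u : A)‖ ^ 2)⁻¹ ≤ star (↑u⁻¹ : A) * ↑u⁻¹ := by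
  rcases eq_or_ne ‖(u : A)‖ 0 with h | h
  · simp [h]
  have h1 : 1 ≤ ‖(u : A)‖ ^ 2 • (star (↑u⁻¹ : A) * ↑u⁻¹) := by
    have := star_left_conjugate_le_conjugate
      (CStarAlgebra.star_mul_le_algebraMap_norm_sq (a := (u : A))) (↑u⁻¹ : A)
    simpa [Algebra.algebraMap_eq_smul_one, mul_assoc, ← star_mul] using this
  have h2 := smul_le_smul_of_nonneg_left h1 (inv_nonneg.mpr (sq_nonneg ‖(u : A)‖))
  rwa [smul_smul, inv_mul_cancel₀ (pow_ne_zero 2 h), one_smul, ← Algebra.algebraMap_eq_smul_one]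
    at h2

theorem Units.algebraMap_div_norm_sq_le_realPart_inv (u : Aˣ) {c : ℝ} (hc : 0 ≤ c)
    (h : algebraMap ℝ A c ≤ ℜ (u : A)) :
    algebraMap ℝ A (c / ‖(u : A)‖ ^ 2) ≤ ℜ (↑u⁻¹ : A) := by
  rw [u.realPart_inv]
  calc algebraMap ℝ A (c / ‖(u : A)‖ ^ 2)
      = c • algebraMap ℝ A (‖(u : A)‖ ^ 2)⁻¹ := by rw [div_eq_mul_inv, map_mul, Algebra.smul_def]
    _ ≤ c • (star (↑u⁻¹ : A) * ↑u⁻¹) :=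
        smul_le_smul_of_nonneg_left u.algebraMap_inv_norm_sq_le_star_inv_mul_inv hc
    _ = star (↑u⁻¹ : A) * algebraMap ℝ A c * ↑u⁻¹ := by
        rw [Algebra.algebraMap_eq_smul_one, mul_smul_comm, smul_mul_assoc, mul_one]
    _ ≤ star (↑u⁻¹ : A) * ℜ (u : A) * ↑u⁻¹ := star_left_conjugate_le_conjugate h _

end CStarAlgebra

theorem Matrix.isUnit_of_algebraMap_le_realPart {n : Type*} [Fintype n] [DecidableEq n]
    {A : Matrix n n ℂ} {c : ℝ} (hc : 0 < c) (h : algebraMap ℝ _ c ≤ (ℜ A : Matrix n n ℂ)) :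
    IsUnit A := by
  have hpos : (ℜ A : Matrix n n ℂ).PosDef :=
    ((isStrictlyPositive_algebraMap hc).of_le h).posDef
  rw [isUnit_iff_isUnit_det, isUnit_iff_ne_zero]
  intro hdet
  obtain ⟨v, hv, hAv⟩ := exists_mulVec_eq_zero_iff.mpr hdet
  refine (hpos.dotProduct_mulVec_pos hv).ne' ?_
  rw [realPart_apply_coe, smul_mulVec, add_mulVec, dotProduct_smul, dotProduct_add, hAv,
    star_eq_conjTranspose, dotProduct_mulVec, ← star_mulVec, hAv]
  simp

theorem inv_hermitianPart_eigenvalue_lower_bound_general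
    (n : ℕ) (lam : ℝ) (hlam : 0 < lam)
    (A : Matrix (Fin n) (Fin n) ℂ)
    (hA : ∀ μ ∈ spectrum ℂ ((2 : ℂ)⁻¹ • (A + Aᴴ)), lam ≤ μ.re) :
    IsUnit A ∧
      ∀ μ ∈ spectrum ℂ ((2 : ℂ)⁻¹ • (A⁻¹ + (A⁻¹)ᴴ)), lam / ‖A‖ ^ 2 ≤ μ.re := by
  simp only [← star_eq_conjTranspose, ← coe_realPart_eq_two_inv_smul] at hA ⊢
  have hle : algebraMap ℝ _ lam ≤ (ℜ A : Matrix (Fin n) (Fin n) ℂ) :=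
    ((ℜ A).prop.algebraMap_le_iff_forall_le_re lam).mpr hA
  obtain ⟨u, rfl⟩ := isUnit_of_algebraMap_le_realPart hlam hle
  refine ⟨u.isUnit, ?_⟩
  rw [← coe_units_inv]
  exact ((ℜ _).prop.algebraMap_le_iff_forall_le_re _).mp
    (u.algebraMap_div_norm_sq_le_realPart_inv hlam.le hle)

/-- If the Hermitian part of a complex `n×n` matrix `A` has all eigenvalues at
least `lam > 0`, then `A` is invertible and the Hermitian part of `A⁻¹` has all eigenvalues at
least `lam / ‖A‖²`, where `‖·‖` is the ℓ²-operator norm. -/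
theorem inv_hermitianPart_eigenvalue_lower_bound
    (n : ℕ) (hn : 1 ≤ n) (lam : ℝ) (hlam : 0 < lam)
    (A : Matrix (Fin n) (Fin n) ℂ)
    (hA : ∀ μ ∈ spectrum ℂ ((2 : ℂ)⁻¹ • (A + Aᴴ)), lam ≤ μ.re) :
    IsUnit A ∧
      ∀ μ ∈ spectrum ℂ ((2 : ℂ)⁻¹ • (A⁻¹ + (A⁻¹)ᴴ)), lam / ‖A‖ ^ 2 ≤ μ.re :=
  inv_hermitianPart_eigenvalue_lower_bound_general n lam hlam A hA
end

section
/- Let n ≥ 1, let 0 < c ≤ C, and let A be a real symmetric n×n matrix all of whose eigenvalues lie in the interval [c, C]. Let B be a real n×n matrix whose symmetric part (B + Bᵀ)/2 has all eigenvalues bounded below by λ > 0. Then for every y ≥ 0, the matrix exponential satisfies ‖exp(−y · A B)‖ ≤ √(C/c) · e^{−cλy}, where ‖·‖ denotes the ℓ²-operator norm. -/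
/-!
Write `A = S * S` with `S = √A` symmetric. Then `A * B = S * (S * B * S) * S⁻¹`, and `S * B * S`
is coercive with constant `c * λ`: `⟪v, S B S v⟫ = ⟪S v, B (S v)⟫ ≥ λ ‖S v‖² = λ ⟪v, A v⟫ ≥ c λ ‖v‖²`.
For an operator `T` with `⟪x, T x⟫ ≥ μ ‖x‖²`, the energy `e^{2μt} ‖e^{-tT} x‖²` is nonincreasing,
so `‖e^{-tT}‖ ≤ e^{-μt}`. Undoing the conjugation costs `‖S‖ ‖S⁻¹‖ ≤ √C / √c`.
-/

open scoped RealInnerProductSpace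

section Dissipative

variable {E : Type*} [NormedAddCommGroup E] [InnerProductSpace ℝ E]

theorem antitone_exp_mul_norm_of_hasDerivAt {T : E →L[ℝ] E} {μ : ℝ}
    (hT : ∀ x, μ * ‖x‖ ^ 2 ≤ ⟪x, T x⟫) {g : ℝ → E} (hg : ∀ t, HasDerivAt g (-T (g t)) t) :
    Antitone fun t ↦ Real.exp (μ * t) * ‖g t‖ := by
  have hsq : Antitone fun t ↦ ‖Real.exp (μ * t) • g t‖ ^ 2 := by
    refine antitone_of_hasDerivAt_nonpos
      (fun t ↦ (((hasDerivAt_id t).const_mul μ).exp.smul (hg t)).norm_sq) fun t ↦ ?_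
    simp only [id, mul_one, Pi.smul_apply', inner_add_right, real_inner_smul_left,
      real_inner_smul_right, inner_neg_right, real_inner_self_eq_norm_sq, Pi.zero_apply]
    nlinarith [mul_nonneg (sq_nonneg (Real.exp (μ * t))) (sub_nonneg.2 (hT (g t)))]
  intro s t hst
  have h := hsq hst
  simp only [norm_smul, Real.norm_of_nonneg (Real.exp_nonneg _)] at h
  exact (pow_le_pow_iff_left₀ (by positivity) (by positivity) two_ne_zero).1 h

theorem ContinuousLinearMap.norm_exp_neg_smul_le [CompleteSpace E] {T : E →L[ℝ] E} {μ : ℝ}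
    (hT : ∀ x, μ * ‖x‖ ^ 2 ≤ ⟪x, T x⟫) {t : ℝ} (ht : 0 ≤ t) :
    ‖NormedSpace.exp (-(t • T))‖ ≤ Real.exp (-(μ * t)) := by
  refine opNorm_le_bound _ (Real.exp_nonneg _) fun x ↦ ?_
  have hg (s : ℝ) : HasDerivAt (fun s : ℝ ↦ NormedSpace.exp (-(s • T)) x)
      (-T (NormedSpace.exp (-(s • T)) x)) s := by
    simpa only [smul_neg, neg_mul, neg_apply, mul_apply_eq_comp, map_zero, add_zero] using
      (hasDerivAt_exp_smul_const' (𝕂 := ℝ) (-T) s).clm_apply (hasDerivAt_const s x)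
  have h := antitone_exp_mul_norm_of_hasDerivAt hT hg ht
  simp only [zero_smul, neg_zero, NormedSpace.exp_zero, mul_zero, Real.exp_zero, one_mul] at h
  rwa [Real.exp_neg, inv_mul_eq_div, le_div_iff₀' (Real.exp_pos _)]

end Dissipative

theorem EuclideanSpace.real_inner_eq_dotProduct {ι : Type*} [Fintype ι]
    (x y : EuclideanSpace ℝ ι) : ⟪x, y⟫ = x.ofLp ⬝ᵥ y.ofLp := by
  simp [EuclideanSpace.inner_eq_star_dotProduct, dotProduct_comm]

namespace Matrix

open scoped Matrix.Norms.L2Operator MatrixOrder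

variable {ι : Type*} [Fintype ι]

theorem IsSymm.dotProduct_mulVec_comm {R : Type*} [CommSemiring R] {S : Matrix ι ι R}
    (hS : S.IsSymm) (v w : ι → R) : v ⬝ᵥ (S *ᵥ w) = (S *ᵥ v) ⬝ᵥ w := by
  rw [dotProduct_mulVec, ← mulVec_transpose, hS.eq]

theorem dotProduct_mulVec_symmPart (B : Matrix ι ι ℝ) (x : ι → ℝ) :
    x ⬝ᵥ (((2 : ℝ)⁻¹ • (B + Bᵀ)) *ᵥ x) = x ⬝ᵥ (B *ᵥ x) := by
  rw [smul_mulVec, dotProduct_smul, add_mulVec, dotProduct_add, dotProduct_transpose_mulVec,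
    smul_eq_mul]
  ring

theorem IsSymm.posDef_of_mul_dotProduct_le {A : Matrix ι ι ℝ} (hA : A.IsSymm) {c : ℝ}
    (hc : 0 < c) (h : ∀ x, c * (x ⬝ᵥ x) ≤ x ⬝ᵥ (A *ᵥ x)) : A.PosDef := by
  refine .of_dotProduct_mulVec_pos (isHermitian_iff_isSymm.2 hA) fun x hx ↦ ?_
  have hxx : 0 < x ⬝ᵥ x := by simpa using dotProduct_star_self_pos_iff.2 hx
  simpa using (mul_pos hc hxx).trans_le (h x)

variable [DecidableEq ι]

theorem PosSemidef.exists_isSymm_mul_self_eq {A : Matrix ι ι ℝ} (hA : A.PosSemidef) :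
    ∃ S : Matrix ι ι ℝ, S.IsSymm ∧ S * S = A :=
  ⟨CFC.sqrt A, isHermitian_iff_isSymm.1 (nonneg_iff_posSemidef.1 (CFC.sqrt_nonneg A)).1,
    CFC.sqrt_mul_sqrt_self A hA.nonneg⟩

theorem l2_opNorm_le_sqrt {M : Matrix ι ι ℝ} {K : ℝ}
    (h : ∀ v, (M *ᵥ v) ⬝ᵥ (M *ᵥ v) ≤ K * (v ⬝ᵥ v)) : ‖M‖ ≤ √K := by
  rw [cstar_norm_def]
  refine ContinuousLinearMap.opNorm_le_bound _ (Real.sqrt_nonneg K) fun x ↦ ?_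
  rw [← Real.sqrt_sq (norm_nonneg x), ← Real.sqrt_mul' _ (sq_nonneg _),
    ← Real.sqrt_sq (norm_nonneg (toEuclideanCLM (𝕜 := ℝ) M x))]
  refine Real.sqrt_le_sqrt ?_
  simpa only [← real_inner_self_eq_norm_sq, EuclideanSpace.real_inner_eq_dotProduct,
    ofLp_toEuclideanCLM] using h x.ofLp

theorem l2_opNorm_inv_le_sqrt_inv {M : Matrix ι ι ℝ} (hM : IsUnit M.det) {c : ℝ} (hc : 0 < c)
    (h : ∀ v, c * (v ⬝ᵥ v) ≤ (M *ᵥ v) ⬝ᵥ (M *ᵥ v)) : ‖M⁻¹‖ ≤ √c⁻¹ := by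
  refine l2_opNorm_le_sqrt fun v ↦ (le_inv_mul_iff₀ hc).2 ?_
  simpa only [mulVec_mulVec, mul_nonsing_inv M hM, one_mulVec] using h (M⁻¹ *ᵥ v)

theorem toEuclideanCLM_exp {𝕜 : Type*} [RCLike 𝕜] (M : Matrix ι ι 𝕜) :
    toEuclideanCLM (𝕜 := 𝕜) (NormedSpace.exp M) = NormedSpace.exp (toEuclideanCLM (𝕜 := 𝕜) M) :=
  NormedSpace.map_exp_of_mem_ball (𝕂 := 𝕜) (toEuclideanCLM (n := ι) (𝕜 := 𝕜))
    (AddMonoidHomClass.isometry_of_norm _ fun M ↦ (cstar_norm_def M).symm).continuous M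
    ((NormedSpace.expSeries_radius_eq_top 𝕜 (Matrix ι ι 𝕜)).symm ▸ edist_lt_top _ _)

theorem l2_opNorm_exp_neg_smul_le {M : Matrix ι ι ℝ} {μ : ℝ}
    (hM : ∀ v, μ * (v ⬝ᵥ v) ≤ v ⬝ᵥ (M *ᵥ v)) {t : ℝ} (ht : 0 ≤ t) :
    ‖NormedSpace.exp (-(t • M))‖ ≤ Real.exp (-(μ * t)) := by
  rw [cstar_norm_def, toEuclideanCLM_exp, map_neg, map_smul]
  refine ContinuousLinearMap.norm_exp_neg_smul_le (fun x ↦ ?_) ht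
  rw [← real_inner_self_eq_norm_sq, EuclideanSpace.real_inner_eq_dotProduct,
    inner_toEuclideanCLM]
  exact hM x.ofLp

end Matrix

open Matrix
open scoped Matrix.Norms.L2Operator

theorem matrix_exp_decay_bound_general
    (n : ℕ) (c C lam : ℝ) (hc : 0 < c) (hlam : 0 < lam)
    (A B : Matrix (Fin n) (Fin n) ℝ)
    (hAsymm : A.IsSymm)
    (hAlb : ∀ x : Fin n → ℝ, c * (x ⬝ᵥ x) ≤ x ⬝ᵥ (A *ᵥ x))
    (hAub : ∀ x : Fin n → ℝ, x ⬝ᵥ (A *ᵥ x) ≤ C * (x ⬝ᵥ x))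
    (hB : ∀ x : Fin n → ℝ, lam * (x ⬝ᵥ x) ≤ x ⬝ᵥ (((2 : ℝ)⁻¹ • (B + Bᵀ)) *ᵥ x)) :
    ∀ y : ℝ, 0 ≤ y →
      ‖NormedSpace.exp (-(y • (A * B)))‖ ≤ Real.sqrt (C / c) * Real.exp (-(c * lam * y)) := by
  intro y hy
  have hA : A.PosDef := hAsymm.posDef_of_mul_dotProduct_le hc hAlb
  obtain ⟨S, hS, rfl⟩ := hA.posSemidef.exists_isSymm_mul_self_eq
  have hSdet : IsUnit S.det :=
    isUnit_of_mul_isUnit_left (det_mul S S ▸ (isUnit_iff_isUnit_det _).1 hA.isUnit)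
  have hSS (v : Fin n → ℝ) : (S *ᵥ v) ⬝ᵥ (S *ᵥ v) = v ⬝ᵥ ((S * S) *ᵥ v) := by
    rw [← mulVec_mulVec, hS.dotProduct_mulVec_comm v]
  have hSBS (v : Fin n → ℝ) : c * lam * (v ⬝ᵥ v) ≤ v ⬝ᵥ ((S * B * S) *ᵥ v) := by
    rw [← mulVec_mulVec, ← mulVec_mulVec, hS.dotProduct_mulVec_comm]
    have hBS := hB (S *ᵥ v)
    rw [dotProduct_mulVec_symmPart, hSS] at hBS
    linarith [mul_le_mul_of_nonneg_left (hAlb v) hlam.le]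
  have hconj : -(y • (S * S * B)) = S * -(y • (S * B * S)) * S⁻¹ := by
    simp only [mul_neg, neg_mul, mul_smul_comm, smul_mul_assoc, Matrix.mul_assoc,
      mul_nonsing_inv S hSdet, Matrix.mul_one]
  calc ‖NormedSpace.exp (-(y • (S * S * B)))‖
      ≤ ‖S‖ * ‖NormedSpace.exp (-(y • (S * B * S)))‖ * ‖S⁻¹‖ := by
        rw [hconj, exp_conj _ _ ((isUnit_iff_isUnit_det S).2 hSdet)]
        exact norm_mul₃_le
    _ ≤ √C * Real.exp (-(c * lam * y)) * √c⁻¹ := by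
        gcongr
        · exact l2_opNorm_le_sqrt fun v ↦ hSS v ▸ hAub v
        · exact l2_opNorm_exp_neg_smul_le hSBS hy
        · exact l2_opNorm_inv_le_sqrt_inv hSdet hc fun v ↦ hSS v ▸ hAlb v
    _ = √(C / c) * Real.exp (-(c * lam * y)) := by
        rw [Real.sqrt_div' C hc.le, Real.sqrt_inv]
        ring

/-- If `A` is real symmetric with eigenvalues in `[c, C]` and the symmetric part
of `B` has eigenvalues at least `lam > 0`, then `‖exp(−y·AB)‖ ≤ √(C/c)·e^{−cλy}` for `y ≥ 0`,
in the ℓ²-operator norm. -/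
theorem matrix_exp_decay_bound
    (n : ℕ) (hn : 1 ≤ n) (c C lam : ℝ) (hc : 0 < c) (hcC : c ≤ C) (hlam : 0 < lam)
    (A B : Matrix (Fin n) (Fin n) ℝ)
    (hAsymm : A.IsSymm)
    (hAlb : ∀ x : Fin n → ℝ, c * (x ⬝ᵥ x) ≤ x ⬝ᵥ (A *ᵥ x))
    (hAub : ∀ x : Fin n → ℝ, x ⬝ᵥ (A *ᵥ x) ≤ C * (x ⬝ᵥ x))
    (hB : ∀ x : Fin n → ℝ, lam * (x ⬝ᵥ x) ≤ x ⬝ᵥ (((2 : ℝ)⁻¹ • (B + Bᵀ)) *ᵥ x)) :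
    ∀ y : ℝ, 0 ≤ y →
      ‖NormedSpace.exp (-(y • (A * B)))‖ ≤ Real.sqrt (C / c) * Real.exp (-(c * lam * y)) :=
  matrix_exp_decay_bound_general n c C lam hc hlam A B hAsymm hAlb hAub hB
end

section
/- Let n ≥ 1, let 0 < c ≤ C, let A be a real symmetric n×n matrix all of whose eigenvalues lie in [c, C], and let γ̃ be a real n×n matrix whose symmetric part (γ̃ + γ̃ᵀ)/2 has all eigenvalues bounded below by λ > 0. Set M = A γ̃. Then for every real n×n matrix D: (i) the matrix-valued function y ↦ exp(−yM) D exp(−yMᵀ) is Bochner integrable on [0, ∞); and (ii) the matrix V = ∫₀^∞ exp(−yM) D exp(−yMᵀ) dy is the unique real n×n matrix satisfying the Lyapunov equation M V + V Mᵀ = D. -/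
open Matrix MeasureTheory
open scoped Matrix.Norms.L2Operator

/-
With `M = A γ'`, the matrix flow `X(t) = exp(-tM) B exp(-tMᵀ)` solves `X' = -(M X + X Mᵀ)` with
`X(0) = B`. Once `X` decays exponentially, integrating `X'` over `[0, ∞)` shows that `V = ∫ X`
solves `M V + V Mᵀ = B`. This holds for every `B`, so the linear map `V ↦ M V + V Mᵀ` is
surjective, hence injective, which gives uniqueness.

The decay comes from an energy estimate: for `u(t) = exp(-tMᵀ) x` the energy `u ⬝ A u` has
derivative `-2 (A u) ⬝ γ' (A u) ≤ -2λ |A u|² ≤ -2λc (u ⬝ A u)`, so it decays like `exp(-2λct)`.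
Together with `c |u|² ≤ u ⬝ A u` and `x ⬝ A x ≤ C |x|²` this gives
`‖exp(-tMᵀ)‖ ≤ √(C/c) exp(-λct)`, and the same bound for `exp(-tM)` by transposition.
-/

open NormedSpace Filter Topology

lemma le_exp_neg_mul_mul_of_hasDerivAt {f f' : ℝ → ℝ} {k : ℝ}
    (hf : ∀ t, HasDerivAt f (f' t) t) (hf' : ∀ t, 0 ≤ t → f' t ≤ -k * f t)
    {t : ℝ} (ht : 0 ≤ t) : f t ≤ Real.exp (-k * t) * f 0 := by
  have hg : ∀ s, HasDerivAt (fun s => Real.exp (k * s) * f s)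
      (Real.exp (k * s) * k * f s + Real.exp (k * s) * f' s) s := fun s => by
    simpa using ((hasDerivAt_id s).const_mul k).exp.fun_mul (hf s)
  have hanti : AntitoneOn (fun s => Real.exp (k * s) * f s) (Set.Ici 0) := by
    refine antitoneOn_of_hasDerivWithinAt_nonpos (convex_Ici 0)
      (fun s _ => (hg s).continuousAt.continuousWithinAt) (fun s _ => (hg s).hasDerivWithinAt)
      fun s hs => ?_
    rw [interior_Ici] at hs
    nlinarith [hf' s (le_of_lt hs), Real.exp_pos (k * s)]
  have h := hanti Set.self_mem_Ici ht ht
  simp only [mul_zero, Real.exp_zero, one_mul] at h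
  calc f t = Real.exp (-k * t) * (Real.exp (k * t) * f t) := by
        rw [← mul_assoc, ← Real.exp_add, neg_mul, neg_add_cancel, Real.exp_zero, one_mul]
    _ ≤ Real.exp (-k * t) * f 0 := by gcongr

variable {ι : Type*} [Fintype ι]

lemma mul_dotProduct_mulVec_le_mulVec_dotProduct_self {A : Matrix ι ι ℝ} {c : ℝ} (hc : 0 ≤ c)
    (hA : ∀ x, c * (x ⬝ᵥ x) ≤ x ⬝ᵥ A *ᵥ x) (u : ι → ℝ) :
    c * (u ⬝ᵥ A *ᵥ u) ≤ (A *ᵥ u) ⬝ᵥ (A *ᵥ u) := by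
  have hcs : (u ⬝ᵥ A *ᵥ u) ^ 2 ≤ (u ⬝ᵥ u) * ((A *ᵥ u) ⬝ᵥ (A *ᵥ u)) := by
    simpa [dotProduct, sq] using Finset.sum_mul_sq_le_sq_mul_sq Finset.univ u (A *ᵥ u)
  have hAu : 0 ≤ (A *ᵥ u) ⬝ᵥ (A *ᵥ u) := Finset.sum_nonneg fun i _ => mul_self_nonneg _
  rcases le_or_gt (u ⬝ᵥ A *ᵥ u) 0 with hq | hq
  · nlinarith
  · refine le_of_mul_le_mul_right ?_ hq
    nlinarith [mul_le_mul_of_nonneg_right (hA u) hAu]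

lemma dotProduct_mulVec_lyapunov {A : Matrix ι ι ℝ} (hA : A.IsSymm) (G : Matrix ι ι ℝ)
    (u : ι → ℝ) :
    u ⬝ᵥ (A * G * A + A * (A * G)ᵀ) *ᵥ u = 2 * ((A *ᵥ u) ⬝ᵥ G *ᵥ (A *ᵥ u)) := by
  have hAu : ∀ v, u ⬝ᵥ A *ᵥ v = (A *ᵥ u) ⬝ᵥ v := fun v => by
    conv_lhs => rw [← hA.eq]
    rw [dotProduct_transpose_mulVec, dotProduct_comm]
  rw [transpose_mul, hA.eq, add_mulVec, dotProduct_add, ← mulVec_mulVec, ← mulVec_mulVec,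
    ← mulVec_mulVec, ← mulVec_mulVec, hAu, hAu, dotProduct_transpose_mulVec, dotProduct_comm]
  ring

lemma dotProduct_inv_two_smul_add_transpose_mulVec (P : Matrix ι ι ℝ) (x : ι → ℝ) :
    x ⬝ᵥ ((2 : ℝ)⁻¹ • (P + Pᵀ)) *ᵥ x = x ⬝ᵥ P *ᵥ x := by
  rw [smul_mulVec, dotProduct_smul, add_mulVec, dotProduct_add, dotProduct_transpose_mulVec,
    smul_eq_mul]
  ring

variable [DecidableEq ι]

lemma hasDerivAt_dotProduct_mulVec {F : ℝ → Matrix ι ι ℝ} {F' : Matrix ι ι ℝ} {t : ℝ}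
    (hF : HasDerivAt F F' t) (x y : ι → ℝ) :
    HasDerivAt (fun s => x ⬝ᵥ F s *ᵥ y) (x ⬝ᵥ F' *ᵥ y) t := by
  let q : Matrix ι ι ℝ →ₗ[ℝ] ℝ :=
    { toFun := fun P => x ⬝ᵥ P *ᵥ y
      map_add' := fun P Q => by simp [add_mulVec, dotProduct_add]
      map_smul' := fun r P => by simp [smul_mulVec] }
  exact (LinearMap.toContinuousLinearMap q).hasFDerivAt.comp_hasDerivAt t hF

lemma Matrix.l2_opNorm_le_sqrt_s6 (P : Matrix ι ι ℝ) {K : ℝ}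
    (hP : ∀ x, (P *ᵥ x) ⬝ᵥ (P *ᵥ x) ≤ K * (x ⬝ᵥ x)) : ‖P‖ ≤ Real.sqrt K := by
  have hnorm : ∀ v : EuclideanSpace ℝ ι, ‖v‖ = Real.sqrt (v.ofLp ⬝ᵥ v.ofLp) := fun v => by
    rw [EuclideanSpace.norm_eq, dotProduct]
    simp_rw [Real.norm_eq_abs, sq_abs, sq]
  rw [l2_opNorm_def]
  refine ContinuousLinearMap.opNorm_le_bound _ (Real.sqrt_nonneg K) fun v => ?_
  have happ : ((toEuclideanLin ≪≫ₗ LinearMap.toContinuousLinearMap) P v).ofLp = P *ᵥ v.ofLp :=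
    rfl
  have hv : 0 ≤ v.ofLp ⬝ᵥ v.ofLp := Finset.sum_nonneg fun i _ => mul_self_nonneg _
  rw [hnorm, hnorm, happ, ← Real.sqrt_mul' _ hv]
  exact Real.sqrt_le_sqrt (hP v.ofLp)

lemma exp_neg_smul_transpose (M : Matrix ι ι ℝ) (t : ℝ) :
    exp (-(t • Mᵀ)) = (exp (-(t • M)))ᵀ := by
  rw [← Matrix.exp_transpose, transpose_neg, transpose_smul]

lemma norm_exp_neg_smul_transpose (M : Matrix ι ι ℝ) (t : ℝ) :
    ‖exp (-(t • Mᵀ))‖ = ‖exp (-(t • M))‖ := by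
  rw [exp_neg_smul_transpose, ← conjTranspose_eq_transpose_of_trivial, l2_opNorm_conjTranspose]

noncomputable def sylvesterFlow (M N B : Matrix ι ι ℝ) (t : ℝ) : Matrix ι ι ℝ :=
  exp (-(t • M)) * B * exp (-(t • N))

section SylvesterFlow

variable (M N B : Matrix ι ι ℝ)

@[simp] lemma sylvesterFlow_zero : sylvesterFlow M N B 0 = B := by
  simp [sylvesterFlow]

lemma hasDerivAt_sylvesterFlow (t : ℝ) :
    HasDerivAt (sylvesterFlow M N B)
      (-(M * sylvesterFlow M N B t + sylvesterFlow M N B t * N)) t := by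
  have hM := hasDerivAt_exp_smul_const' (𝕂 := ℝ) (-M) t
  have hN := hasDerivAt_exp_smul_const (𝕂 := ℝ) (-N) t
  simp only [smul_neg] at hM hN
  refine ((hM.mul_const B).mul hN).congr_deriv ?_
  simp only [sylvesterFlow, neg_mul, mul_neg, mul_assoc, neg_add]

lemma continuous_sylvesterFlow : Continuous (sylvesterFlow M N B) :=
  continuous_iff_continuousAt.2 fun t => (hasDerivAt_sylvesterFlow M N B t).continuousAt

lemma mul_sylvesterFlow_add_sylvesterFlow_mul (t : ℝ) :
    M * sylvesterFlow M N B t + sylvesterFlow M N B t * N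
      = sylvesterFlow M N (M * B + B * N) t := by
  have hM : Commute M (exp (-(t • M))) := (((Commute.refl M).smul_right t).neg_right).exp_right
  have hN : Commute N (exp (-(t • N))) := (((Commute.refl N).smul_right t).neg_right).exp_right
  rw [sylvesterFlow, sylvesterFlow, ← mul_assoc M, ← mul_assoc M, hM.eq,
    mul_assoc (exp (-(t • M)) * B) _ N, ← hN.eq]
  noncomm_ring

lemma dotProduct_mulVec_sylvesterFlow_transpose (P : Matrix ι ι ℝ) (t : ℝ) (x : ι → ℝ) :
    x ⬝ᵥ sylvesterFlow M Mᵀ P t *ᵥ x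
      = (exp (-(t • Mᵀ)) *ᵥ x) ⬝ᵥ P *ᵥ (exp (-(t • Mᵀ)) *ᵥ x) := by
  rw [sylvesterFlow, ← mulVec_mulVec, ← mulVec_mulVec, ← transpose_transpose M,
    exp_neg_smul_transpose Mᵀ, transpose_transpose, dotProduct_transpose_mulVec, dotProduct_comm]

variable {M N} {K L a b : ℝ}

lemma norm_sylvesterFlow_le
    (hM : ∀ t, 0 ≤ t → ‖exp (-(t • M))‖ ≤ K * Real.exp (-a * t))
    (hN : ∀ t, 0 ≤ t → ‖exp (-(t • N))‖ ≤ L * Real.exp (-b * t)) {t : ℝ} (ht : 0 ≤ t) :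
    ‖sylvesterFlow M N B t‖ ≤ K * L * ‖B‖ * Real.exp (-(a + b) * t) := by
  calc ‖sylvesterFlow M N B t‖
      ≤ ‖exp (-(t • M))‖ * ‖B‖ * ‖exp (-(t • N))‖ := norm_mul₃_le
    _ ≤ K * Real.exp (-a * t) * ‖B‖ * (L * Real.exp (-b * t)) := by
        gcongr
        · exact mul_nonneg ((norm_nonneg _).trans (hM t ht)) (norm_nonneg B)
        · exact hM t ht
        · exact hN t ht
    _ = K * L * ‖B‖ * Real.exp (-(a + b) * t) := by
        rw [neg_add, add_mul, Real.exp_add]; ring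

lemma integrableOn_sylvesterFlow
    (hM : ∀ t, 0 ≤ t → ‖exp (-(t • M))‖ ≤ K * Real.exp (-a * t))
    (hN : ∀ t, 0 ≤ t → ‖exp (-(t • N))‖ ≤ L * Real.exp (-b * t)) (hab : 0 < a + b) :
    IntegrableOn (sylvesterFlow M N B) (Set.Ici 0) := by
  have hbound : IntegrableOn (fun t => K * L * ‖B‖ * Real.exp (-(a + b) * t)) (Set.Ici 0) := by
    rw [integrableOn_Ici_iff_integrableOn_Ioi]
    exact (exp_neg_integrableOn_Ioi 0 hab).const_mul _
  refine hbound.mono' (continuous_sylvesterFlow M N B).aestronglyMeasurable ?_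
  filter_upwards [self_mem_ae_restrict measurableSet_Ici] with t ht
  exact norm_sylvesterFlow_le B hM hN ht

lemma tendsto_sylvesterFlow_atTop
    (hM : ∀ t, 0 ≤ t → ‖exp (-(t • M))‖ ≤ K * Real.exp (-a * t))
    (hN : ∀ t, 0 ≤ t → ‖exp (-(t • N))‖ ≤ L * Real.exp (-b * t)) (hab : 0 < a + b) :
    Tendsto (sylvesterFlow M N B) atTop (𝓝 0) := by
  refine squeeze_zero_norm' (a := fun t => K * L * ‖B‖ * Real.exp (-(a + b) * t)) ?_ ?_
  · filter_upwards [eventually_ge_atTop 0] with t ht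
    exact norm_sylvesterFlow_le B hM hN ht
  · simpa using (Real.tendsto_exp_atBot.comp
      (tendsto_id.const_mul_atTop_of_neg (neg_lt_zero.2 hab))).const_mul (K * L * ‖B‖)

lemma sylvester_integral_solves
    (hM : ∀ t, 0 ≤ t → ‖exp (-(t • M))‖ ≤ K * Real.exp (-a * t))
    (hN : ∀ t, 0 ≤ t → ‖exp (-(t • N))‖ ≤ L * Real.exp (-b * t)) (hab : 0 < a + b) :
    M * (∫ t in Set.Ici 0, sylvesterFlow M N B t)
      + (∫ t in Set.Ici 0, sylvesterFlow M N B t) * N = B := by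
  have hint : IntegrableOn (sylvesterFlow M N B) (Set.Ioi 0) :=
    (integrableOn_sylvesterFlow B hM hN hab).mono_set Set.Ioi_subset_Ici_self
  have hFTC := integral_Ioi_of_hasDerivAt_of_tendsto
    (continuous_sylvesterFlow M N B).continuousWithinAt
    (fun t _ => hasDerivAt_sylvesterFlow M N B t)
    ((hint.const_mul M).add (hint.mul_const N)).neg
    (tendsto_sylvesterFlow_atTop B hM hN hab)
  rw [integral_neg, integral_add (hint.const_mul M) (hint.mul_const N),
    integral_const_mul_of_integrable hint, integral_mul_const_of_integrable hint,
    sylvesterFlow_zero, zero_sub, neg_inj] at hFTC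
  rwa [integral_Ici_eq_integral_Ioi]

theorem sylvester_eq_iff
    (hM : ∀ t, 0 ≤ t → ‖exp (-(t • M))‖ ≤ K * Real.exp (-a * t))
    (hN : ∀ t, 0 ≤ t → ‖exp (-(t • N))‖ ≤ L * Real.exp (-b * t)) (hab : 0 < a + b)
    (V : Matrix ι ι ℝ) :
    M * V + V * N = B ↔ V = ∫ t in Set.Ici 0, sylvesterFlow M N B t := by
  let S : Matrix ι ι ℝ →ₗ[ℝ] Matrix ι ι ℝ := LinearMap.mulLeft ℝ M + LinearMap.mulRight ℝ N
  have hS : ∀ W, S W = M * W + W * N := fun _ => rfl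
  have hsolves : ∀ B', S (∫ t in Set.Ici 0, sylvesterFlow M N B' t) = B' := fun B' =>
    sylvester_integral_solves B' hM hN hab
  have hinj : Function.Injective S :=
    LinearMap.injective_iff_surjective.2 fun B' => ⟨_, hsolves B'⟩
  rw [← hS]
  exact ⟨fun hV => hinj (hV.trans (hsolves B).symm), fun hV => hV ▸ hsolves B⟩

end SylvesterFlow

lemma dotProduct_mulVec_exp_neg_smul_transpose_le {A G : Matrix ι ι ℝ} {c lam : ℝ}
    (hA : A.IsSymm) (hc : 0 ≤ c) (hAc : ∀ x, c * (x ⬝ᵥ x) ≤ x ⬝ᵥ A *ᵥ x)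
    (hlam : 0 ≤ lam) (hG : ∀ x, lam * (x ⬝ᵥ x) ≤ x ⬝ᵥ G *ᵥ x) (x : ι → ℝ) {t : ℝ}
    (ht : 0 ≤ t) :
    (exp (-(t • (A * G)ᵀ)) *ᵥ x) ⬝ᵥ A *ᵥ (exp (-(t • (A * G)ᵀ)) *ᵥ x)
      ≤ Real.exp (-(2 * lam * c) * t) * (x ⬝ᵥ A *ᵥ x) := by
  set M := A * G
  have hderiv : ∀ s, HasDerivAt (fun s => x ⬝ᵥ sylvesterFlow M Mᵀ A s *ᵥ x)
      (-(x ⬝ᵥ sylvesterFlow M Mᵀ (M * A + A * Mᵀ) s *ᵥ x)) s := fun s => by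
    simpa [mul_sylvesterFlow_add_sylvesterFlow_mul, neg_mulVec] using
      hasDerivAt_dotProduct_mulVec (hasDerivAt_sylvesterFlow M Mᵀ A s) x x
  have hdissipation : ∀ s, 0 ≤ s →
      -(x ⬝ᵥ sylvesterFlow M Mᵀ (M * A + A * Mᵀ) s *ᵥ x)
        ≤ -(2 * lam * c) * (x ⬝ᵥ sylvesterFlow M Mᵀ A s *ᵥ x) := fun s _ => by
    set u := exp (-(s • Mᵀ)) *ᵥ x
    rw [dotProduct_mulVec_sylvesterFlow_transpose, dotProduct_mulVec_sylvesterFlow_transpose,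
      dotProduct_mulVec_lyapunov hA]
    nlinarith [hG (A *ᵥ u), mul_dotProduct_mulVec_le_mulVec_dotProduct_self hc hAc u]
  simpa [dotProduct_mulVec_sylvesterFlow_transpose] using
    le_exp_neg_mul_mul_of_hasDerivAt hderiv hdissipation ht

lemma norm_exp_neg_smul_transpose_mul_le {A G : Matrix ι ι ℝ} {c C lam : ℝ}
    (hA : A.IsSymm) (hc : 0 < c) (hAc : ∀ x, c * (x ⬝ᵥ x) ≤ x ⬝ᵥ A *ᵥ x)
    (hAC : ∀ x, x ⬝ᵥ A *ᵥ x ≤ C * (x ⬝ᵥ x))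
    (hlam : 0 ≤ lam) (hG : ∀ x, lam * (x ⬝ᵥ x) ≤ x ⬝ᵥ G *ᵥ x) {t : ℝ} (ht : 0 ≤ t) :
    ‖exp (-(t • (A * G)ᵀ))‖ ≤ Real.sqrt (C / c) * Real.exp (-(lam * c) * t) := by
  have hsqrt : Real.sqrt (C / c * Real.exp (-(2 * lam * c) * t))
      = Real.sqrt (C / c) * Real.exp (-(lam * c) * t) := by
    rw [Real.sqrt_mul' _ (Real.exp_nonneg _), ← Real.exp_half]
    ring_nf
  rw [← hsqrt]
  refine l2_opNorm_le_sqrt_s6 _ fun x => ?_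
  have hdecay := dotProduct_mulVec_exp_neg_smul_transpose_le hA hc.le hAc hlam hG x ht
  rw [div_mul_eq_mul_div, div_mul_eq_mul_div, le_div_iff₀ hc]
  nlinarith [hAc (exp (-(t • (A * G)ᵀ)) *ᵥ x), hAC x, Real.exp_pos (-(2 * lam * c) * t)]

theorem lyapunov_equation_unique_solution_general
    (n : ℕ) (c C lam : ℝ) (hc : 0 < c) (hlam : 0 < lam)
    (A γ' D : Matrix (Fin n) (Fin n) ℝ)
    (hAsymm : A.IsSymm)
    (hAlb : ∀ x : Fin n → ℝ, c * (x ⬝ᵥ x) ≤ x ⬝ᵥ (A *ᵥ x))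
    (hAub : ∀ x : Fin n → ℝ, x ⬝ᵥ (A *ᵥ x) ≤ C * (x ⬝ᵥ x))
    (hγ : ∀ x : Fin n → ℝ, lam * (x ⬝ᵥ x) ≤ x ⬝ᵥ (((2 : ℝ)⁻¹ • (γ' + γ'ᵀ)) *ᵥ x)) :
    IntegrableOn
      (fun y : ℝ => NormedSpace.exp (-(y • (A * γ'))) * D *
        NormedSpace.exp (-(y • (A * γ')ᵀ))) (Set.Ici 0) ∧
    ∀ V : Matrix (Fin n) (Fin n) ℝ,
      (A * γ') * V + V * (A * γ')ᵀ = D ↔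
        V = ∫ y in Set.Ici (0 : ℝ),
          NormedSpace.exp (-(y • (A * γ'))) * D * NormedSpace.exp (-(y • (A * γ')ᵀ)) := by
  have hγ' : ∀ x, lam * (x ⬝ᵥ x) ≤ x ⬝ᵥ γ' *ᵥ x := fun x => by
    simpa only [dotProduct_inv_two_smul_add_transpose_mulVec] using hγ x
  have hMt : ∀ t, 0 ≤ t →
      ‖exp (-(t • (A * γ')ᵀ))‖ ≤ Real.sqrt (C / c) * Real.exp (-(lam * c) * t) :=
    fun t => norm_exp_neg_smul_transpose_mul_le hAsymm hc hAlb hAub hlam.le hγ'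
  have hM : ∀ t, 0 ≤ t →
      ‖exp (-(t • (A * γ')))‖ ≤ Real.sqrt (C / c) * Real.exp (-(lam * c) * t) :=
    fun t => norm_exp_neg_smul_transpose (A * γ') t ▸ hMt t
  have hrate : 0 < lam * c + lam * c := by positivity
  exact ⟨integrableOn_sylvesterFlow D hM hMt hrate, sylvester_eq_iff D hM hMt hrate⟩

/-- Let `M = A * γ̃` where `A` is real symmetric with eigenvalues in `[c, C]`
and the symmetric part of `γ̃` has eigenvalues at least `lam > 0`. For any real `n×n` matrix `D`,
the map `y ↦ exp(−yM) D exp(−yMᵀ)` is Bochner integrable on `[0, ∞)` and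
`V = ∫₀^∞ exp(−yM) D exp(−yMᵀ) dy` is the unique solution of `M V + V Mᵀ = D`. -/
theorem lyapunov_equation_unique_solution
    (n : ℕ) (hn : 1 ≤ n) (c C lam : ℝ) (hc : 0 < c) (hcC : c ≤ C) (hlam : 0 < lam)
    (A γ' D : Matrix (Fin n) (Fin n) ℝ)
    (hAsymm : A.IsSymm)
    (hAlb : ∀ x : Fin n → ℝ, c * (x ⬝ᵥ x) ≤ x ⬝ᵥ (A *ᵥ x))
    (hAub : ∀ x : Fin n → ℝ, x ⬝ᵥ (A *ᵥ x) ≤ C * (x ⬝ᵥ x))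
    (hγ : ∀ x : Fin n → ℝ, lam * (x ⬝ᵥ x) ≤ x ⬝ᵥ (((2 : ℝ)⁻¹ • (γ' + γ'ᵀ)) *ᵥ x)) :
    IntegrableOn
      (fun y : ℝ => NormedSpace.exp (-(y • (A * γ'))) * D *
        NormedSpace.exp (-(y • (A * γ')ᵀ))) (Set.Ici 0) ∧
    ∀ V : Matrix (Fin n) (Fin n) ℝ,
      (A * γ') * V + V * (A * γ')ᵀ = D ↔
        V = ∫ y in Set.Ici (0 : ℝ),
          NormedSpace.exp (-(y • (A * γ'))) * D * NormedSpace.exp (-(y • (A * γ')ᵀ)) :=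
  lyapunov_equation_unique_solution_general n c C lam hc hlam A γ' D hAsymm hAlb hAub hγ
end

section
/- Let n ≥ 1, let g and γ be real symmetric positive definite n×n matrices, and set B = γ g⁻¹. Then the matrix-valued function y ↦ exp(−yB) γ exp(−yBᵀ) is Bochner integrable on [0, ∞), and 2 ∫₀^∞ exp(−yB) γ exp(−yBᵀ) dy = g. (This is the identity 2 G_{kl}^{ab}(t,q) γ_{ab}(t,q) = g_{kl}(t,q) underlying the simplification of the noise-induced drift for a particle on a Riemannian manifold under the fluctuation–dissipation relation Σ = 2 k_B T γ.) -/
open Matrix MeasureTheory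
open scoped Matrix.Norms.L2Operator

/-!
Both matrices are diagonalised by one congruence: `g = P Pᵀ` and `γ = P D Pᵀ` with
`D = diag μ`, `μ > 0` (take `P = g^{1/2} U`, where the orthogonal `U` diagonalises
`g^{-1/2} γ g^{-1/2}`). Then `B = γ g⁻¹ = P D P⁻¹`, so `exp(-yB) = P exp(-yD) P⁻¹` and the
integrand is `P diag(μᵢ e^{-2μᵢy}) Pᵀ`. Each diagonal entry integrates to `1/2` over `[0, ∞)`,
leaving `P Pᵀ / 2 = g / 2`.
-/

lemma integrableOn_mul_exp_neg_two_mul_Ioi {μ : ℝ} (hμ : 0 < μ) :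
    IntegrableOn (fun y : ℝ => μ * Real.exp (-2 * μ * y)) (Set.Ioi 0) :=
  (integrableOn_exp_mul_Ioi (by linarith) 0).const_mul μ

lemma integral_mul_exp_neg_two_mul_Ioi {μ : ℝ} (hμ : 0 < μ) :
    ∫ y in Set.Ioi (0 : ℝ), μ * Real.exp (-2 * μ * y) = 1 / 2 := by
  rw [integral_const_mul, integral_exp_mul_Ioi (by linarith)]
  field_simp
  simp

namespace Matrix

variable {ι : Type*} [Fintype ι] [DecidableEq ι]

section Integral

variable {X : Type*} [MeasurableSpace X] {ν : Measure X} {f : X → ι → ℝ}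

noncomputable def mulDiagonalMulCLM (A C : Matrix ι ι ℝ) : (ι → ℝ) →L[ℝ] Matrix ι ι ℝ :=
  LinearMap.toContinuousLinearMap
    ((LinearMap.mulRight ℝ C).comp ((LinearMap.mulLeft ℝ A).comp (diagonalLinearMap ι ℝ ℝ)))

lemma integrable_mul_diagonal_mul (hf : ∀ i, Integrable (f · i) ν) (A C : Matrix ι ι ℝ) :
    Integrable (fun x => A * diagonal (f x) * C) ν :=
  (mulDiagonalMulCLM A C).integrable_comp (Integrable.of_eval hf)

lemma integral_mul_diagonal_mul (hf : ∀ i, Integrable (f · i) ν) (A C : Matrix ι ι ℝ) :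
    ∫ x, A * diagonal (f x) * C ∂ν = A * diagonal (fun i => ∫ x, f x i ∂ν) * C := by
  rw [← funext (eval_integral hf)]
  exact (mulDiagonalMulCLM A C).integral_comp_comm (Integrable.of_eval hf)

end Integral

lemma PosDef.exists_orthogonal_diagonalization {M : Matrix ι ι ℝ} (hM : M.PosDef) :
    ∃ (U : Matrix ι ι ℝ) (μ : ι → ℝ), U * Uᵀ = 1 ∧ (∀ i, 0 < μ i) ∧
      M = U * diagonal μ * Uᵀ :=
  ⟨hM.isHermitian.eigenvectorUnitary, _,
    mem_unitaryGroup_iff.mp hM.isHermitian.eigenvectorUnitary.2, hM.eigenvalues_pos,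
    by simpa [Function.comp_def, star_eq_conjTranspose] using hM.isHermitian.spectral_theorem⟩

open scoped MatrixOrder in
lemma PosDef.exists_simultaneous_diagonalization {g γ : Matrix ι ι ℝ} (hg : g.PosDef)
    (hγ : γ.PosDef) :
    ∃ (P : Matrix ι ι ℝ) (μ : ι → ℝ), IsUnit P ∧ (∀ i, 0 < μ i) ∧
      g = P * Pᵀ ∧ γ = P * diagonal μ * Pᵀ := by
  set s := CFC.sqrt g
  have hsT : sᵀ = s := (CFC.sqrt_nonneg g).posSemidef.isHermitian
  have hss : s * s = g := CFC.sqrt_mul_sqrt_self g hg.posSemidef.nonneg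
  have hs : IsUnit s := isUnit_of_mul_isUnit_left (hss ▸ hg.isUnit)
  have hM : (s⁻¹ * γ * s⁻¹).PosDef := by
    simpa [transpose_nonsing_inv, hsT] using
      hγ.conjTranspose_mul_mul_same (mulVec_injective_of_isUnit (isUnit_nonsing_inv_iff.mpr hs))
  obtain ⟨U, μ, hU, hμ, hspec⟩ := hM.exists_orthogonal_diagonalization
  refine ⟨s * U, μ, hs.mul (.of_mul_eq_one _ hU), hμ, ?_, ?_⟩
  · rw [transpose_mul, hsT, mul_assoc, ← mul_assoc U, hU, one_mul, hss]
  · have hdet := (isUnit_iff_isUnit_det s).mp hs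
    calc γ = s * (s⁻¹ * γ * s⁻¹) * s := by
          simp [mul_assoc, mul_nonsing_inv_cancel_left _ _ hdet, nonsing_inv_mul _ hdet]
      _ = s * U * diagonal μ * (s * U)ᵀ := by
          rw [hspec, transpose_mul, hsT]; simp only [mul_assoc]

lemma exp_conj_diagonal {P : Matrix ι ι ℝ} (hP : IsUnit P) (d : ι → ℝ) :
    NormedSpace.exp (P * diagonal d * P⁻¹) = P * diagonal (fun i => Real.exp (d i)) * P⁻¹ := by
  rw [exp_conj _ _ hP, exp_diagonal, Pi.exp_def, Real.exp_eq_exp_ℝ]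

lemma exp_neg_smul_mul_mul_exp_neg_smul_transpose {P : Matrix ι ι ℝ} (hP : IsUnit P)
    (μ : ι → ℝ) (y : ℝ) :
    NormedSpace.exp (-(y • (P * diagonal μ * P⁻¹))) * (P * diagonal μ * Pᵀ) *
        NormedSpace.exp (-(y • (P * diagonal μ * P⁻¹)ᵀ)) =
      P * diagonal (fun i => μ i * Real.exp (-2 * μ i * y)) * Pᵀ := by
  have hdet := (isUnit_iff_isUnit_det P).mp hP
  have hexp : NormedSpace.exp (-(y • (P * diagonal μ * P⁻¹))) =
      P * diagonal (fun i => Real.exp (-(y * μ i))) * P⁻¹ := by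
    rw [← exp_conj_diagonal hP, ← diagonal_neg, show (fun i => y * μ i) = y • μ from rfl,
      diagonal_smul, mul_neg, neg_mul, mul_smul_comm, smul_mul_assoc]
  rw [← transpose_smul, ← transpose_neg, exp_transpose, hexp]
  simp only [transpose_mul, transpose_nonsing_inv, diagonal_transpose, mul_assoc,
    nonsing_inv_mul_cancel_left _ _ hdet,
    mul_nonsing_inv_cancel_left _ _ ((det_transpose P).symm ▸ hdet)]
  simp only [← mul_assoc, diagonal_mul_diagonal]
  congr 3 with i
  rw [mul_right_comm, mul_comm, ← Real.exp_add]
  ring_nf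

end Matrix

theorem riemannian_fluctuation_dissipation_identity_general
    (n : ℕ) (g γ' : Matrix (Fin n) (Fin n) ℝ)
    (hg : g.PosDef) (hγ : γ'.PosDef) :
    IntegrableOn
      (fun y : ℝ => NormedSpace.exp (-(y • (γ' * g⁻¹))) * γ' *
        NormedSpace.exp (-(y • (γ' * g⁻¹)ᵀ))) (Set.Ici 0) ∧
    (2 : ℝ) • (∫ y in Set.Ici (0 : ℝ),
        NormedSpace.exp (-(y • (γ' * g⁻¹))) * γ' * NormedSpace.exp (-(y • (γ' * g⁻¹)ᵀ))) =
      g := by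
  obtain ⟨P, μ, hP, hμ, rfl, rfl⟩ := hg.exists_simultaneous_diagonalization hγ
  have hB : P * diagonal μ * Pᵀ * (P * Pᵀ)⁻¹ = P * diagonal μ * P⁻¹ := by
    rw [Matrix.mul_inv_rev, ← mul_assoc, mul_nonsing_inv_cancel_right _ _
      (by rwa [det_transpose, ← isUnit_iff_isUnit_det])]
  have hf (i : Fin n) := integrableOn_mul_exp_neg_two_mul_Ioi (hμ i)
  simp_rw [hB, exp_neg_smul_mul_mul_exp_neg_smul_transpose hP]
  rw [integrableOn_Ici_iff_integrableOn_Ioi, integral_Ici_eq_integral_Ioi]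
  refine ⟨integrable_mul_diagonal_mul hf _ _, ?_⟩
  rw [integral_mul_diagonal_mul hf, funext fun i => integral_mul_exp_neg_two_mul_Ioi (hμ i)]
  have hhalf : (2 : ℝ) • (fun _ : Fin n => (1 / 2 : ℝ)) = 1 := by ext; norm_num
  rw [← smul_mul_assoc, ← mul_smul_comm, ← diagonal_smul, hhalf, Pi.one_def, diagonal_one,
    mul_one]

/-- For `g` and `γ` real symmetric positive definite and `B = γ g⁻¹`, the map
`y ↦ exp(−yB) γ exp(−yBᵀ)` is Bochner integrable on `[0, ∞)` and
`2 ∫₀^∞ exp(−yB) γ exp(−yBᵀ) dy = g`. -/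
theorem riemannian_fluctuation_dissipation_identity
    (n : ℕ) (hn : 1 ≤ n) (g γ' : Matrix (Fin n) (Fin n) ℝ)
    (hg : g.PosDef) (hγ : γ'.PosDef) :
    IntegrableOn
      (fun y : ℝ => NormedSpace.exp (-(y • (γ' * g⁻¹))) * γ' *
        NormedSpace.exp (-(y • (γ' * g⁻¹)ᵀ))) (Set.Ici 0) ∧
    (2 : ℝ) • (∫ y in Set.Ici (0 : ℝ),
        NormedSpace.exp (-(y • (γ' * g⁻¹))) * γ' * NormedSpace.exp (-(y • (γ' * g⁻¹)ᵀ))) =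
      g :=
  riemannian_fluctuation_dissipation_identity_general n g γ' hg hγ
end

section
/- Fix an integer n ≥ 1 and constants m > 0, c₁ ≥ 0, c₂ ≥ 0, and define K : ℝⁿ → ℝ by K(z) = ‖z‖²/(2m) + c₁ (log(1 + c₂‖z‖²))². Then there exist constants c > 0 and M ≥ 0 such that ‖∇K(z)‖² + M ≥ c·K(z) for all z ∈ ℝⁿ. -/
/-!
`K` is radial, `K z = φ (‖z‖²)`, so `∇K z = 2 φ'(‖z‖²) • z`. Since `φ' ≥ 1/(2m)`, this gives
`‖∇K z‖² ≥ ‖z‖²/m²`. On the other hand `log y ≤ 2√y` makes `(log (1 + c₂ t))²` grow at most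
linearly, so `φ t ≤ (1/(2m) + 4 c₁ c₂) t + 4 c₁`; hence `K` is bounded by an affine function
of `‖∇K‖²`.
-/

open Real

theorem Real.log_sq_le_four_mul {y : ℝ} (hy : 1 ≤ y) : log y ^ 2 ≤ 4 * y := by
  have hy₀ : 0 ≤ y := by linarith
  have hlog : log y ≤ 2 * √y := by
    have := log_le_sub_one_of_pos (sqrt_pos.2 (by linarith : 0 < y))
    rw [log_sqrt hy₀] at this
    linarith
  calc log y ^ 2 ≤ (2 * √y) ^ 2 := pow_le_pow_left₀ (log_nonneg hy) hlog 2
    _ = 4 * y := by rw [mul_pow, sq_sqrt hy₀]; norm_num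

section RadialGradient

variable {E : Type*} [NormedAddCommGroup E] [InnerProductSpace ℝ E] [CompleteSpace E]

theorem HasDerivAt.hasGradientAt_comp_norm_sq {φ : ℝ → ℝ} {φ' : ℝ} {z : E}
    (hφ : HasDerivAt φ φ' (‖z‖ ^ 2)) :
    HasGradientAt (fun x => φ (‖x‖ ^ 2)) ((2 * φ') • z) z := by
  rw [hasGradientAt_iff_hasFDerivAt]
  refine (hφ.hasFDerivAt.comp z (hasStrictFDerivAt_norm_sq z).hasFDerivAt).congr_fderiv ?_
  ext v
  simp only [ContinuousLinearMap.comp_apply, coe_innerSL_apply, smul_apply, smul_eq_mul,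
    nsmul_eq_mul, Nat.cast_ofNat, ContinuousLinearMap.toSpanSingleton_apply,
    InnerProductSpace.toDual_apply_apply, real_inner_smul_left]
  ring

theorem exists_mul_le_norm_gradient_sq_add_of_radial {φ φ' : ℝ → ℝ} {a C B : ℝ}
    (ha : 0 < a) (hC : 0 < C) (hB : 0 ≤ B)
    (hφ : ∀ t, 0 ≤ t → HasDerivAt φ (φ' t) t) (hφ' : ∀ t, 0 ≤ t → a ≤ φ' t)
    (hφ_le : ∀ t, 0 ≤ t → φ t ≤ C * t + B) :
    ∃ c > (0 : ℝ), ∃ M : ℝ, 0 ≤ M ∧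
      ∀ z : E, c * φ (‖z‖ ^ 2) ≤ ‖gradient (fun x => φ (‖x‖ ^ 2)) z‖ ^ 2 + M := by
  refine ⟨4 * a ^ 2 / C, by positivity, 4 * a ^ 2 / C * B, by positivity, fun z => ?_⟩
  have ht : 0 ≤ ‖z‖ ^ 2 := by positivity
  have hgrad : ‖gradient (fun x => φ (‖x‖ ^ 2)) z‖ ^ 2 = 4 * φ' (‖z‖ ^ 2) ^ 2 * ‖z‖ ^ 2 := by
    rw [(hφ _ ht).hasGradientAt_comp_norm_sq.gradient, norm_smul, mul_pow, norm_mul,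
      Real.norm_two, mul_pow, Real.norm_eq_abs, sq_abs]
    norm_num
  have hsq : a ^ 2 ≤ φ' (‖z‖ ^ 2) ^ 2 := pow_le_pow_left₀ ha.le (hφ' _ ht) 2
  calc 4 * a ^ 2 / C * φ (‖z‖ ^ 2) ≤ 4 * a ^ 2 / C * (C * ‖z‖ ^ 2 + B) := by
        gcongr; exact hφ_le _ ht
    _ = 4 * a ^ 2 * ‖z‖ ^ 2 + 4 * a ^ 2 / C * B := by field_simp
    _ ≤ ‖gradient (fun x => φ (‖x‖ ^ 2)) z‖ ^ 2 + 4 * a ^ 2 / C * B := by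
        rw [hgrad]; gcongr

end RadialGradient

noncomputable def nuclearKineticProfile (m c₁ c₂ t : ℝ) : ℝ :=
  t / (2 * m) + c₁ * log (1 + c₂ * t) ^ 2

section NuclearKineticProfile

variable {m c₁ c₂ t : ℝ}

theorem hasDerivAt_nuclearKineticProfile (ht : 1 + c₂ * t ≠ 0) :
    HasDerivAt (nuclearKineticProfile m c₁ c₂)
      (1 / (2 * m) + 2 * c₁ * c₂ * log (1 + c₂ * t) / (1 + c₂ * t)) t := by
  have hlin : HasDerivAt (fun t => 1 + c₂ * t) c₂ t := by
    simpa using ((hasDerivAt_id t).const_mul c₂).const_add 1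
  refine (((hasDerivAt_id t).div_const (2 * m)).add
    (((hlin.log ht).pow 2).const_mul c₁)).congr_deriv ?_
  simp only [Nat.cast_ofNat, Nat.add_one_sub_one, pow_one]
  ring

theorem one_div_two_mul_le_deriv_nuclearKineticProfile (hc₁ : 0 ≤ c₁) (hc₂ : 0 ≤ c₂)
    (ht : 0 ≤ t) :
    1 / (2 * m) ≤ 1 / (2 * m) + 2 * c₁ * c₂ * log (1 + c₂ * t) / (1 + c₂ * t) := by
  have : 0 ≤ log (1 + c₂ * t) := log_nonneg (by nlinarith)
  have : 0 ≤ 2 * c₁ * c₂ * log (1 + c₂ * t) / (1 + c₂ * t) := by positivity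
  linarith

theorem nuclearKineticProfile_le (hc₁ : 0 ≤ c₁) (hc₂ : 0 ≤ c₂) (ht : 0 ≤ t) :
    nuclearKineticProfile m c₁ c₂ t ≤ (1 / (2 * m) + 4 * c₁ * c₂) * t + 4 * c₁ := by
  have := mul_le_mul_of_nonneg_left (log_sq_le_four_mul (by nlinarith : 1 ≤ 1 + c₂ * t)) hc₁
  calc nuclearKineticProfile m c₁ c₂ t ≤ 1 / (2 * m) * t + c₁ * (4 * (1 + c₂ * t)) := by
        rw [nuclearKineticProfile, div_eq_mul_one_div, mul_comm t]; gcongr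
    _ = _ := by ring

end NuclearKineticProfile

theorem nuclear_kinetic_energy_coercivity_general
    (n : ℕ) (m c₁ c₂ : ℝ) (hm : 0 < m) (hc₁ : 0 ≤ c₁) (hc₂ : 0 ≤ c₂)
    (K : EuclideanSpace ℝ (Fin n) → ℝ)
    (hK : ∀ z, K z = ‖z‖ ^ 2 / (2 * m) + c₁ * Real.log (1 + c₂ * ‖z‖ ^ 2) ^ 2) :
    ∃ c > (0 : ℝ), ∃ M : ℝ, 0 ≤ M ∧ ∀ z, c * K z ≤ ‖gradient K z‖ ^ 2 + M := by
  obtain rfl : K = fun z => nuclearKineticProfile m c₁ c₂ (‖z‖ ^ 2) := funext hK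
  exact exists_mul_le_norm_gradient_sq_add_of_radial (by positivity) (by positivity)
    (by positivity) (fun t ht => hasDerivAt_nuclearKineticProfile (by positivity))
    (fun t ht => one_div_two_mul_le_deriv_nuclearKineticProfile hc₁ hc₂ ht)
    (fun t ht => nuclearKineticProfile_le hc₁ hc₂ ht)

/-- For `K(z) = ‖z‖²/(2m) + c₁ (log(1 + c₂‖z‖²))²` there exist `c > 0` and
`M ≥ 0` with `‖∇K(z)‖² + M ≥ c·K(z)` for all `z`. -/
theorem nuclear_kinetic_energy_coercivity
    (n : ℕ) (hn : 1 ≤ n) (m c₁ c₂ : ℝ) (hm : 0 < m) (hc₁ : 0 ≤ c₁) (hc₂ : 0 ≤ c₂)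
    (K : EuclideanSpace ℝ (Fin n) → ℝ)
    (hK : ∀ z, K z = ‖z‖ ^ 2 / (2 * m) + c₁ * Real.log (1 + c₂ * ‖z‖ ^ 2) ^ 2) :
    ∃ c > (0 : ℝ), ∃ M : ℝ, 0 ≤ M ∧ ∀ z, c * K z ≤ ‖gradient K z‖ ^ 2 + M :=
  nuclear_kinetic_energy_coercivity_general n m c₁ c₂ hm hc₁ hc₂ K hK
end

section
/- Fix an integer n ≥ 1 and constants m > 0, c₁ ≥ 0, c₂ ≥ 0, and define K : ℝⁿ → ℝ by K(z) = ‖z‖²/(2m) + c₁ (log(1 + c₂‖z‖²))². Then for every δ > 0 there exists M > 0 such that ‖∇K(z)‖ ≤ M + δ·K(z) for all z ∈ ℝⁿ. -/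
/-!
Writing `K z = φ (‖z‖²)` with `φ s = s / (2m) + c₁ log² (1 + c₂ s)`, the gradient is
`∇K z = 2 φ'(‖z‖²) • z`, and `0 ≤ 2 φ' ≤ 1/m + 4 c₁ c₂` because `log y ≤ y`. So `‖∇K‖` grows at most
linearly, while `K` grows at least quadratically; Young's inequality
`C r ≤ δ r² / (2m) + m C² / (2δ)` absorbs the linear term into `δ K`.
-/

open Real

noncomputable def kineticProfile (m c₁ c₂ s : ℝ) : ℝ :=
  s / (2 * m) + c₁ * log (1 + c₂ * s) ^ 2

theorem hasDerivAt_kineticProfile (m c₁ : ℝ) {c₂ s : ℝ} (hs : 0 < 1 + c₂ * s) :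
    HasDerivAt (kineticProfile m c₁ c₂)
      (1 / (2 * m) + 2 * c₁ * c₂ * log (1 + c₂ * s) / (1 + c₂ * s)) s := by
  have hlog : HasDerivAt (fun s => log (1 + c₂ * s)) (c₂ / (1 + c₂ * s)) s := by
    simpa using (((hasDerivAt_id s).const_mul c₂).const_add 1).log hs.ne'
  refine (((hasDerivAt_id s).div_const (2 * m)).add ((hlog.pow 2).const_mul c₁)).congr_deriv ?_
  simp only [Nat.cast_ofNat]
  ring

section KineticGradient

variable {F : Type*} [NormedAddCommGroup F] [InnerProductSpace ℝ F] [CompleteSpace F]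

theorem HasDerivAt.hasGradientAt_comp_norm_sq_s10 {f : ℝ → ℝ} {f' : ℝ} {z : F}
    (hf : HasDerivAt f f' (‖z‖ ^ 2)) :
    HasGradientAt (fun z => f (‖z‖ ^ 2)) ((2 * f') • z) z := by
  rw [hasGradientAt_iff_hasFDerivAt]
  refine (hf.comp_hasFDerivAt z (hasFDerivAt_id z).norm_sq).congr_fderiv ?_
  ext w
  simp only [ContinuousLinearMap.comp_id, smul_apply, coe_innerSL_apply, nsmul_eq_mul,
    InnerProductSpace.toDual_apply_apply, map_smul, smul_eq_mul, id_eq, Nat.cast_ofNat]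
  ring

theorem norm_gradient_kineticProfile_le {m c₁ c₂ : ℝ} (hm : 0 < m) (hc₁ : 0 ≤ c₁) (hc₂ : 0 ≤ c₂)
    (z : F) :
    ‖gradient (fun z => kineticProfile m c₁ c₂ (‖z‖ ^ 2)) z‖ ≤ (1 / m + 4 * c₁ * c₂) * ‖z‖ := by
  set y := 1 + c₂ * ‖z‖ ^ 2
  have hy : 1 ≤ y := le_add_of_nonneg_right (by positivity)
  have hlog_div : log y / y ≤ 1 := div_le_one_of_le₀ (log_le_self (by linarith)) (by linarith)
  have hlog : 0 ≤ log y := log_nonneg hy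
  rw [(hasDerivAt_kineticProfile m c₁ (by linarith)).hasGradientAt_comp_norm_sq_s10.gradient,
    norm_smul, norm_of_nonneg (by positivity)]
  gcongr
  calc 2 * (1 / (2 * m) + 2 * c₁ * c₂ * log y / y)
      = 1 / m + 4 * c₁ * c₂ * (log y / y) := by field_simp; ring
    _ ≤ 1 / m + 4 * c₁ * c₂ := by
      linarith [mul_le_of_le_one_right (by positivity : (0 : ℝ) ≤ 4 * c₁ * c₂) hlog_div]

end KineticGradient

theorem mul_le_mul_sq_add_sq_div {ε : ℝ} (hε : 0 < ε) (a b : ℝ) :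
    a * b ≤ ε * b ^ 2 + a ^ 2 / (4 * ε) := by
  rw [← sub_nonneg]
  have key : ε * b ^ 2 + a ^ 2 / (4 * ε) - a * b = (2 * ε * b - a) ^ 2 / (4 * ε) := by
    field_simp
    ring
  rw [key]
  positivity

theorem nuclear_kinetic_energy_gradient_bound_general
    (n : ℕ) (m c₁ c₂ : ℝ) (hm : 0 < m) (hc₁ : 0 ≤ c₁) (hc₂ : 0 ≤ c₂)
    (K : EuclideanSpace ℝ (Fin n) → ℝ)
    (hK : ∀ z, K z = ‖z‖ ^ 2 / (2 * m) + c₁ * Real.log (1 + c₂ * ‖z‖ ^ 2) ^ 2) :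
    ∀ δ > (0 : ℝ), ∃ M > (0 : ℝ), ∀ z, ‖gradient K z‖ ≤ M + δ * K z := by
  intro δ hδ
  set C := 1 / m + 4 * c₁ * c₂
  refine ⟨m * C ^ 2 / (2 * δ), by positivity, fun z => ?_⟩
  have hK_ge : ‖z‖ ^ 2 / (2 * m) ≤ K z := hK z ▸ le_add_of_nonneg_right (by positivity)
  have hKφ : K = fun z => kineticProfile m c₁ c₂ (‖z‖ ^ 2) := funext hK
  calc ‖gradient K z‖ ≤ C * ‖z‖ := hKφ ▸ norm_gradient_kineticProfile_le hm hc₁ hc₂ z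
    _ ≤ δ / (2 * m) * ‖z‖ ^ 2 + C ^ 2 / (4 * (δ / (2 * m))) :=
      mul_le_mul_sq_add_sq_div (by positivity) _ _
    _ = m * C ^ 2 / (2 * δ) + δ * (‖z‖ ^ 2 / (2 * m)) := by field_simp; ring
    _ ≤ m * C ^ 2 / (2 * δ) + δ * K z := by gcongr

/-- For `K(z) = ‖z‖²/(2m) + c₁ (log(1 + c₂‖z‖²))²`, for every `δ > 0` there
exists `M > 0` with `‖∇K(z)‖ ≤ M + δ·K(z)` for all `z`. -/
theorem nuclear_kinetic_energy_gradient_bound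
    (n : ℕ) (hn : 1 ≤ n) (m c₁ c₂ : ℝ) (hm : 0 < m) (hc₁ : 0 ≤ c₁) (hc₂ : 0 ≤ c₂)
    (K : EuclideanSpace ℝ (Fin n) → ℝ)
    (hK : ∀ z, K z = ‖z‖ ^ 2 / (2 * m) + c₁ * Real.log (1 + c₂ * ‖z‖ ^ 2) ^ 2) :
    ∀ δ > (0 : ℝ), ∃ M > (0 : ℝ), ∀ z, ‖gradient K z‖ ≤ M + δ * K z :=
  nuclear_kinetic_energy_gradient_bound_general n m c₁ c₂ hm hc₁ hc₂ K hK
end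

section
/- Fix an integer n ≥ 1 and constants m > 0, c₁ ≥ 0, c₂ ≥ 0, and define K : ℝⁿ → ℝ by K(z) = ‖z‖²/(2m) + c₁ (log(1 + c₂‖z‖²))². Then K is twice continuously differentiable and its Hessian is uniformly bounded: there exists M > 0 such that (Σ_{i,j=1}^{n} (∂ᵢ∂ⱼK(z))²)^{1/2} ≤ M for all z ∈ ℝⁿ. -/
/-!
`K` is the radial function `z ↦ g (‖z‖²)` with `g s = s / (2m) + c₁ log (1 + c₂ s)²`, so its
Hessian is `2 g'(‖z‖²) δᵢⱼ + 4 g''(‖z‖²) zᵢ zⱼ`. Each entry is therefore bounded once `g'` and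
`s ↦ s g''(s)` are bounded on `[0, ∞)`, which holds because `0 ≤ log (1 + u) ≤ u` for `u ≥ 0`.
-/

open Real RealInnerProductSpace

section Radial

variable {E : Type*} [NormedAddCommGroup E] [InnerProductSpace ℝ E] {g g' g'' : ℝ → ℝ}

theorem HasDerivAt.hasFDerivAt_comp_norm_sq {d : ℝ} {x : E} (hg : HasDerivAt g d (‖x‖ ^ 2)) :
    HasFDerivAt (fun y : E => g (‖y‖ ^ 2)) ((2 * d) • innerSL ℝ x) x :=
  (hg.comp_hasFDerivAt x (hasStrictFDerivAt_norm_sq x).hasFDerivAt).congr_fderiv <| by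
    rw [smul_comm, ← ofNat_smul_eq_nsmul (R := ℝ), smul_smul]

theorem contDiff_comp_norm_sq {k : WithTop ℕ∞} (hg : ∀ s, 0 ≤ s → ContDiffAt ℝ k g s) :
    ContDiff ℝ k (fun y : E => g (‖y‖ ^ 2)) :=
  contDiff_iff_contDiffAt.2 fun x => (hg _ (sq_nonneg _)).comp x (contDiff_norm_sq ℝ).contDiffAt

theorem fderiv_comp_norm_sq_apply (hg : ∀ s, 0 ≤ s → HasDerivAt g (g' s) s) (x v : E) :
    fderiv ℝ (fun y : E => g (‖y‖ ^ 2)) x v = 2 * g' (‖x‖ ^ 2) * ⟪x, v⟫ := by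
  simp [(hg _ (sq_nonneg ‖x‖)).hasFDerivAt_comp_norm_sq.fderiv]

theorem fderiv_fderiv_comp_norm_sq_apply (hg : ∀ s, 0 ≤ s → HasDerivAt g (g' s) s)
    (hg' : ∀ s, 0 ≤ s → HasDerivAt g' (g'' s) s) (x v w : E) :
    fderiv ℝ (fun y => fderiv ℝ (fun y : E => g (‖y‖ ^ 2)) y v) x w
      = 4 * g'' (‖x‖ ^ 2) * ⟪x, v⟫ * ⟪x, w⟫ + 2 * g' (‖x‖ ^ 2) * ⟪w, v⟫ := by
  simp_rw [fderiv_comp_norm_sq_apply hg]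
  have hd : HasFDerivAt (fun y => 2 * g' (‖y‖ ^ 2) * ⟪y, v⟫) _ x :=
    ((hg' _ (sq_nonneg ‖x‖)).hasFDerivAt_comp_norm_sq.const_mul 2).mul
      ((hasFDerivAt_id x).inner ℝ (hasFDerivAt_const v x))
  rw [hd.fderiv]
  simp only [id_eq, add_apply, smul_apply, ContinuousLinearMap.comp_apply,
    ContinuousLinearMap.prod_apply, ContinuousLinearMap.id_apply, zero_apply,
    fderivInnerCLM_apply, inner_zero_right, real_inner_comm, zero_add, smul_eq_mul,
    coe_innerSL_apply]
  ring

theorem abs_fderiv_fderiv_comp_norm_sq_apply_le (hg : ∀ s, 0 ≤ s → HasDerivAt g (g' s) s)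
    (hg' : ∀ s, 0 ≤ s → HasDerivAt g' (g'' s) s) {A B : ℝ} (hA : ∀ s, 0 ≤ s → |g' s| ≤ A)
    (hB : ∀ s, 0 ≤ s → s * |g'' s| ≤ B) (x : E) {v w : E} (hv : ‖v‖ ≤ 1) (hw : ‖w‖ ≤ 1) :
    |fderiv ℝ (fun y => fderiv ℝ (fun y : E => g (‖y‖ ^ 2)) y v) x w| ≤ 4 * B + 2 * A := by
  have hinner {u : E} (hu : ‖u‖ ≤ 1) : |⟪x, u⟫| ≤ ‖x‖ :=
    (abs_real_inner_le_norm x u).trans (mul_le_of_le_one_right (norm_nonneg x) hu)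
  have hxvw : |⟪x, v⟫ * ⟪x, w⟫| ≤ ‖x‖ ^ 2 := by
    rw [abs_mul, sq]
    exact mul_le_mul (hinner hv) (hinner hw) (abs_nonneg _) (norm_nonneg x)
  have hwv : |⟪w, v⟫| ≤ 1 :=
    (abs_real_inner_le_norm w v).trans (mul_le_one₀ hw (norm_nonneg v) hv)
  rw [fderiv_fderiv_comp_norm_sq_apply hg hg']
  calc _ ≤ 4 * (|g'' (‖x‖ ^ 2)| * |⟪x, v⟫ * ⟪x, w⟫|) + 2 * (|g' (‖x‖ ^ 2)| * |⟪w, v⟫|) := by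
        refine (abs_add_le _ _).trans_eq ?_
        simp only [abs_mul, abs_two, abs_of_pos (four_pos : (0 : ℝ) < 4)]
        ring
    _ ≤ 4 * B + 2 * A := by
        gcongr
        · calc _ ≤ |g'' (‖x‖ ^ 2)| * ‖x‖ ^ 2 := mul_le_mul_of_nonneg_left hxvw (abs_nonneg _)
            _ ≤ B := (mul_comm _ _).trans_le (hB _ (sq_nonneg ‖x‖))
        · exact (mul_le_of_le_one_right (abs_nonneg _) hwv).trans (hA _ (sq_nonneg ‖x‖))

end Radial

section LogOneAddMulSq

variable {b s : ℝ}

theorem hasDerivAt_one_add_mul : HasDerivAt (fun s => 1 + b * s) b s := by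
  simpa using ((hasDerivAt_id s).const_mul b).const_add 1

theorem hasDerivAt_log_one_add_mul_sq (hs : 0 < 1 + b * s) :
    HasDerivAt (fun s => log (1 + b * s) ^ 2) (2 * b * log (1 + b * s) / (1 + b * s)) s :=
  ((hasDerivAt_one_add_mul.log hs.ne').pow 2).congr_deriv (by ring)

theorem hasDerivAt_two_mul_mul_log_one_add_mul_div (hs : 0 < 1 + b * s) :
    HasDerivAt (fun s => 2 * b * log (1 + b * s) / (1 + b * s))
      (2 * b ^ 2 * (1 - log (1 + b * s)) / (1 + b * s) ^ 2) s :=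
  (((hasDerivAt_one_add_mul.log hs.ne').const_mul (2 * b)).div hasDerivAt_one_add_mul
    hs.ne').congr_deriv (by field_simp)

theorem log_one_add_mul_mem_Icc (hb : 0 ≤ b) (hs : 0 ≤ s) :
    log (1 + b * s) ∈ Set.Icc 0 (b * s) := by
  have hbs : 0 ≤ b * s := mul_nonneg hb hs
  exact ⟨log_nonneg (by linarith),
    by linarith [log_le_sub_one_of_pos (by linarith : 0 < 1 + b * s)]⟩

theorem abs_two_mul_mul_log_one_add_mul_div_le (hb : 0 ≤ b) (hs : 0 ≤ s) :
    |2 * b * log (1 + b * s) / (1 + b * s)| ≤ 2 * b := by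
  obtain ⟨hlog₀, hlog⟩ := log_one_add_mul_mem_Icc hb hs
  have hbs : 0 ≤ b * s := mul_nonneg hb hs
  rw [abs_of_nonneg (by positivity), div_le_iff₀ (by positivity)]
  nlinarith

theorem mul_abs_two_mul_sq_mul_one_sub_log_div_le (hb : 0 ≤ b) (hs : 0 ≤ s) :
    s * |2 * b ^ 2 * (1 - log (1 + b * s)) / (1 + b * s) ^ 2| ≤ 2 * b := by
  obtain ⟨hlog₀, hlog⟩ := log_one_add_mul_mem_Icc hb hs
  have hbs : 0 ≤ b * s := mul_nonneg hb hs
  have hone_sub : |1 - log (1 + b * s)| ≤ 1 + b * s := abs_le.2 ⟨by linarith, by linarith⟩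
  rw [abs_div, abs_mul, abs_of_nonneg (by positivity : (0 : ℝ) ≤ 2 * b ^ 2),
    abs_of_pos (by positivity : (0 : ℝ) < (1 + b * s) ^ 2), mul_div_assoc',
    div_le_iff₀ (by positivity)]
  calc s * (2 * b ^ 2 * |1 - log (1 + b * s)|)
      = 2 * b * (b * s * |1 - log (1 + b * s)|) := by ring
    _ ≤ 2 * b * ((1 + b * s) * (1 + b * s)) := by gcongr; linarith
    _ = 2 * b * (1 + b * s) ^ 2 := by ring

end LogOneAddMulSq

theorem Real.sqrt_sum_sum_sq_le {ι : Type*} [Fintype ι] {a : ι → ι → ℝ} {C : ℝ} (hC : 0 ≤ C)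
    (ha : ∀ i j, |a i j| ≤ C) : √(∑ i, ∑ j, a i j ^ 2) ≤ Fintype.card ι * C := by
  rw [Real.sqrt_le_left (by positivity)]
  calc ∑ i, ∑ j, a i j ^ 2 ≤ ∑ _i : ι, ∑ _j : ι, C ^ 2 :=
        Finset.sum_le_sum fun i _ => Finset.sum_le_sum fun j _ => sq_le_sq' (abs_le.1 (ha i j)).1
          (abs_le.1 (ha i j)).2
    _ = (Fintype.card ι * C) ^ 2 := by simp; ring

theorem nuclear_kinetic_energy_hessian_bound_general
    (n : ℕ) (m c₁ c₂ : ℝ) (hc₂ : 0 ≤ c₂)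
    (K : EuclideanSpace ℝ (Fin n) → ℝ)
    (hK : ∀ z, K z = ‖z‖ ^ 2 / (2 * m) + c₁ * Real.log (1 + c₂ * ‖z‖ ^ 2) ^ 2) :
    ContDiff ℝ 2 K ∧
      ∃ M > (0 : ℝ), ∀ z : EuclideanSpace ℝ (Fin n),
        Real.sqrt (∑ i : Fin n, ∑ j : Fin n,
          (fderiv ℝ (fun y => fderiv ℝ K y (EuclideanSpace.single j (1 : ℝ))) z
            (EuclideanSpace.single i (1 : ℝ))) ^ 2) ≤ M := by
  have hpos {s : ℝ} (hs : 0 ≤ s) : 0 < 1 + c₂ * s := by positivity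
  set g : ℝ → ℝ := fun s => s / (2 * m) + c₁ * log (1 + c₂ * s) ^ 2
  set g' : ℝ → ℝ := fun s => 1 / (2 * m) + c₁ * (2 * c₂ * log (1 + c₂ * s) / (1 + c₂ * s))
  set g'' : ℝ → ℝ := fun s => c₁ * (2 * c₂ ^ 2 * (1 - log (1 + c₂ * s)) / (1 + c₂ * s) ^ 2)
  have hg (s : ℝ) (hs : 0 ≤ s) : HasDerivAt g (g' s) s :=
    ((hasDerivAt_id s).div_const _).add ((hasDerivAt_log_one_add_mul_sq (hpos hs)).const_mul c₁)
  have hg' (s : ℝ) (hs : 0 ≤ s) : HasDerivAt g' (g'' s) s :=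
    ((hasDerivAt_two_mul_mul_log_one_add_mul_div (hpos hs)).const_mul c₁).const_add _
  have hA (s : ℝ) (hs : 0 ≤ s) : |g' s| ≤ |1 / (2 * m)| + |c₁| * (2 * c₂) :=
    (abs_add_le _ _).trans <| by
      rw [abs_mul]; gcongr; exact abs_two_mul_mul_log_one_add_mul_div_le hc₂ hs
  have hB (s : ℝ) (hs : 0 ≤ s) : s * |g'' s| ≤ |c₁| * (2 * c₂) := by
    rw [abs_mul, mul_left_comm]
    exact mul_le_mul_of_nonneg_left (mul_abs_two_mul_sq_mul_one_sub_log_div_le hc₂ hs)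
      (abs_nonneg c₁)
  obtain rfl : K = fun z => g (‖z‖ ^ 2) := funext hK
  set C := 4 * (|c₁| * (2 * c₂)) + 2 * (|1 / (2 * m)| + |c₁| * (2 * c₂))
  have hC : 0 ≤ C := by positivity
  refine ⟨contDiff_comp_norm_sq fun s hs => ?_, n * C + 1, by positivity, fun z => ?_⟩
  · fun_prop (disch := exact (hpos hs).ne')
  · refine (Real.sqrt_sum_sum_sq_le hC fun i j => ?_).trans (by simp)
    exact abs_fderiv_fderiv_comp_norm_sq_apply_le hg hg' hA hB z (by simp) (by simp)

/-- `K(z) = ‖z‖²/(2m) + c₁ (log(1 + c₂‖z‖²))²` is `C²` and its Hessian is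
uniformly bounded: there is `M > 0` with `(Σᵢⱼ (∂ᵢ∂ⱼK(z))²)^{1/2} ≤ M` for all `z`. -/
theorem nuclear_kinetic_energy_hessian_bound
    (n : ℕ) (hn : 1 ≤ n) (m c₁ c₂ : ℝ) (hm : 0 < m) (hc₁ : 0 ≤ c₁) (hc₂ : 0 ≤ c₂)
    (K : EuclideanSpace ℝ (Fin n) → ℝ)
    (hK : ∀ z, K z = ‖z‖ ^ 2 / (2 * m) + c₁ * Real.log (1 + c₂ * ‖z‖ ^ 2) ^ 2) :
    ContDiff ℝ 2 K ∧
      ∃ M > (0 : ℝ), ∀ z : EuclideanSpace ℝ (Fin n),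
        Real.sqrt (∑ i : Fin n, ∑ j : Fin n,
          (fderiv ℝ (fun y => fderiv ℝ K y (EuclideanSpace.single j (1 : ℝ))) z
            (EuclideanSpace.single i (1 : ℝ))) ^ 2) ≤ M :=
  nuclear_kinetic_energy_hessian_bound_general n m c₁ c₂ hc₂ K hK
end

section
/- Fix an integer n ≥ 1, integers 1 ≤ k₁ ≤ k₂, and constants 0 < c̃ ≤ C̃. Let A be a real symmetric n×n matrix with all eigenvalues in [c̃, C̃], and let d_{k₁}, …, d_{k₂} be real numbers with 0 ≤ d_l ≤ C̃ for all l, d_{k₁} ≥ c̃, and d_{k₂} ≥ c̃. Define K : ℝⁿ → ℝ by K(z) = Σ_{l=k₁}^{k₂} d_l (zᵀAz)^l. Then there exist constants c > 0 and M ≥ 0 such that ‖∇K(z)‖² + M ≥ c·K(z) for all z ∈ ℝⁿ. -/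
open Matrix

open scoped RealInnerProductSpace

/-!
With `q(z) = ⟪z, A z⟫` we have `c̃ ‖z‖² ≤ q(z)` and `K = Σ d_l q^l`. As `q` is quadratic,
Euler's identity gives `⟪∇K(z), z⟫ = Σ 2 l d_l q(z)^l ≥ 2 K(z)`, so `2 K(z) ≤ ‖∇K(z)‖ ‖z‖`.
For `‖z‖ ≥ 1` the term of degree `k₁` alone gives `K(z) ≥ c̃^(k₁+1) ‖z‖²`, and the two bounds
combine to `4 c̃^(k₁+1) K(z) ≤ ‖∇K(z)‖²`. On the unit ball `K` is bounded by compactness,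
which accounts for `M`.
-/

lemma four_mul_mul_le_sq_of_two_mul_le_mul {a f G r : ℝ} (ha : 0 ≤ a) (hr : 0 < r)
    (hgrowth : a * r ^ 2 ≤ f) (heuler : 2 * f ≤ G * r) : 4 * a * f ≤ G ^ 2 := by
  have hf : 0 ≤ f := (by positivity : 0 ≤ a * r ^ 2).trans hgrowth
  have hsq : (2 * f) ^ 2 ≤ (G * r) ^ 2 := pow_le_pow_left₀ (by positivity) heuler 2
  have : 4 * a * f * r ^ 2 ≤ G ^ 2 * r ^ 2 := by nlinarith
  exact le_of_mul_le_mul_right this (by positivity)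

variable {E : Type*} [NormedAddCommGroup E] [InnerProductSpace ℝ E]

theorem exists_mul_le_norm_gradient_sq_add [ProperSpace E] {f : E → ℝ} (hf : Continuous f)
    {a : ℝ} (ha : 0 < a) (heuler : ∀ z, 2 * f z ≤ ⟪gradient f z, z⟫)
    (hgrowth : ∀ z, 1 ≤ ‖z‖ → a * ‖z‖ ^ 2 ≤ f z) :
    ∃ c > (0 : ℝ), ∃ M : ℝ, 0 ≤ M ∧ ∀ z, c * f z ≤ ‖gradient f z‖ ^ 2 + M := by
  obtain ⟨B, hB⟩ := (isCompact_closedBall (0 : E) 1).bddAbove_image hf.continuousOn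
  refine ⟨4 * a, by positivity, 4 * a * max B 0, by positivity, fun z => ?_⟩
  rcases le_or_gt ‖z‖ 1 with hz | hz
  · have hfB : f z ≤ B := hB ⟨z, mem_closedBall_zero_iff.2 hz, rfl⟩
    calc 4 * a * f z ≤ 4 * a * max B 0 := by gcongr; exact hfB.trans (le_max_left _ _)
      _ ≤ ‖gradient f z‖ ^ 2 + 4 * a * max B 0 := le_add_of_nonneg_left (sq_nonneg _)
  · have := four_mul_mul_le_sq_of_two_mul_le_mul ha.le (one_pos.trans hz) (hgrowth z hz.le)
      ((heuler z).trans (real_inner_le_norm _ _))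
    have : 0 ≤ 4 * a * max B 0 := by positivity
    linarith

section KineticEnergy

variable (T : E →L[ℝ] E) (s : Finset ℕ) (d : ℕ → ℝ)

noncomputable def kineticEnergy (z : E) : ℝ :=
  ∑ l ∈ s, d l * ⟪z, T z⟫ ^ l

lemma continuous_kineticEnergy : Continuous (kineticEnergy T s d) := by
  unfold kineticEnergy; fun_prop

lemma hasFDerivAt_inner_self_apply (z : E) :
    HasFDerivAt (fun x => ⟪x, T x⟫) (innerSL ℝ (T z) + (innerSL ℝ z).comp T) z := by
  refine ((hasFDerivAt_id z).inner ℝ T.hasFDerivAt).congr_fderiv ?_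
  ext h
  simp [fderivInnerCLM_apply, real_inner_comm, add_comm]

lemma hasFDerivAt_kineticEnergy (z : E) :
    HasFDerivAt (kineticEnergy T s d)
      (∑ l ∈ s, (d l * (l * ⟪z, T z⟫ ^ (l - 1))) • (innerSL ℝ (T z) + (innerSL ℝ z).comp T)) z :=
  HasFDerivAt.fun_sum fun l _ =>
    (((hasDerivAt_pow l _).comp_hasFDerivAt z (hasFDerivAt_inner_self_apply T z)).const_mul
      (d l)).congr_fderiv (smul_smul _ _ _)

lemma fderiv_kineticEnergy_apply_self (z : E) :
    fderiv ℝ (kineticEnergy T s d) z z = 2 * ∑ l ∈ s, l * (d l * ⟪z, T z⟫ ^ l) := by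
  rw [(hasFDerivAt_kineticEnergy T s d z).fderiv, _root_.sum_apply, Finset.mul_sum]
  refine Finset.sum_congr rfl fun l _ => ?_
  have hpow : (l : ℝ) * ⟪z, T z⟫ ^ (l - 1) * ⟪z, T z⟫ = l * ⟪z, T z⟫ ^ l := by
    rcases eq_or_ne l 0 with rfl | hl
    · simp
    · rw [mul_assoc, pow_sub_one_mul hl]
  simp only [smul_add, _root_.add_apply, _root_.smul_apply, coe_innerSL_apply, real_inner_comm,
    smul_eq_mul, ContinuousLinearMap.comp_apply]
  linear_combination 2 * d l * hpow

lemma pow_succ_mul_norm_sq_le_kineticEnergy {b : ℝ} (hb : 0 ≤ b)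
    (hT : ∀ z, b * ‖z‖ ^ 2 ≤ ⟪z, T z⟫) (hd : ∀ l ∈ s, 0 ≤ d l) {k : ℕ} (hks : k ∈ s) (hk : 1 ≤ k)
    (hdk : b ≤ d k) {z : E} (hz : 1 ≤ ‖z‖) :
    b ^ (k + 1) * ‖z‖ ^ 2 ≤ kineticEnergy T s d z := by
  have hq : 0 ≤ ⟪z, T z⟫ := (by positivity : 0 ≤ b * ‖z‖ ^ 2).trans (hT z)
  calc b ^ (k + 1) * ‖z‖ ^ 2 = b * (b ^ k * ‖z‖ ^ 2) := by ring
    _ ≤ b * (b * ‖z‖ ^ 2) ^ k := by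
      rw [mul_pow]; gcongr; exact le_self_pow₀ (one_le_pow₀ hz) (by omega)
    _ ≤ d k * ⟪z, T z⟫ ^ k :=
      mul_le_mul hdk (pow_le_pow_left₀ (by positivity) (hT z) k) (by positivity) (hd k hks)
    _ ≤ kineticEnergy T s d z :=
      Finset.single_le_sum (fun l hl => mul_nonneg (hd l hl) (pow_nonneg hq l)) hks

variable [CompleteSpace E]

lemma two_mul_kineticEnergy_le_inner_gradient (hT : ∀ z, 0 ≤ ⟪z, T z⟫)
    (hs : ∀ l ∈ s, 1 ≤ l) (hd : ∀ l ∈ s, 0 ≤ d l) (z : E) :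
    2 * kineticEnergy T s d z ≤ ⟪gradient (kineticEnergy T s d) z, z⟫ := by
  rw [gradient, InnerProductSpace.toDual_symm_apply, fderiv_kineticEnergy_apply_self,
    kineticEnergy]
  refine mul_le_mul_of_nonneg_left (Finset.sum_le_sum fun l hl => ?_) zero_le_two
  exact le_mul_of_one_le_left (mul_nonneg (hd l hl) (pow_nonneg (hT z) l)) (mod_cast hs l hl)

end KineticEnergy

theorem poly_kinetic_energy_coercivity_general
    (n : ℕ) (k₁ k₂ : ℕ) (hk₁ : 1 ≤ k₁) (hk₁₂ : k₁ ≤ k₂)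
    (ctil Ctil : ℝ) (hc : 0 < ctil)
    (A : Matrix (Fin n) (Fin n) ℝ)
    (hAlb : ∀ x : Fin n → ℝ, ctil * (x ⬝ᵥ x) ≤ x ⬝ᵥ (A *ᵥ x))
    (d : ℕ → ℝ)
    (hd : ∀ l ∈ Finset.Icc k₁ k₂, 0 ≤ d l ∧ d l ≤ Ctil)
    (hdk₁ : ctil ≤ d k₁)
    (K : EuclideanSpace ℝ (Fin n) → ℝ)
    (hK : ∀ z : EuclideanSpace ℝ (Fin n),
      K z = ∑ l ∈ Finset.Icc k₁ k₂, d l * ((fun i => z i) ⬝ᵥ (A *ᵥ fun i => z i)) ^ l) :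
    ∃ c > (0 : ℝ), ∃ M : ℝ, 0 ≤ M ∧ ∀ z, c * K z ≤ ‖gradient K z‖ ^ 2 + M := by
  set T := toEuclideanCLM (𝕜 := ℝ) A
  obtain rfl : K = kineticEnergy T (Finset.Icc k₁ k₂) d :=
    funext fun z => by simp only [hK, kineticEnergy, T, inner_toEuclideanCLM]
  have hT : ∀ z : EuclideanSpace ℝ (Fin n), ctil * ‖z‖ ^ 2 ≤ ⟪z, T z⟫ := fun z => by
    rw [← real_inner_self_eq_norm_sq, EuclideanSpace.inner_eq_star_dotProduct, inner_toEuclideanCLM]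
    simpa using hAlb z.ofLp
  have hT₀ : ∀ z, 0 ≤ ⟪z, T z⟫ := fun z => (by positivity : 0 ≤ ctil * ‖z‖ ^ 2).trans (hT z)
  have hd₀ : ∀ l ∈ Finset.Icc k₁ k₂, 0 ≤ d l := fun l hl => (hd l hl).1
  exact exists_mul_le_norm_gradient_sq_add (continuous_kineticEnergy ..) (pow_pos hc (k₁ + 1))
    (two_mul_kineticEnergy_le_inner_gradient T _ d hT₀
      (fun l hl => hk₁.trans (Finset.mem_Icc.1 hl).1) hd₀)
    (fun z hz => pow_succ_mul_norm_sq_le_kineticEnergy T _ d hc.le hT hd₀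
      (Finset.left_mem_Icc.2 hk₁₂) hk₁ hdk₁ hz)

/-- For `K(z) = Σ_{l=k₁}^{k₂} d_l (zᵀAz)^l` with `A` symmetric with eigenvalues
in `[c̃, C̃]`, `0 ≤ d_l ≤ C̃`, and `d_{k₁}, d_{k₂} ≥ c̃`, there exist `c > 0`, `M ≥ 0` with
`‖∇K(z)‖² + M ≥ c·K(z)` for all `z`. -/
theorem poly_kinetic_energy_coercivity
    (n : ℕ) (hn : 1 ≤ n) (k₁ k₂ : ℕ) (hk₁ : 1 ≤ k₁) (hk₁₂ : k₁ ≤ k₂)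
    (ctil Ctil : ℝ) (hc : 0 < ctil) (hcC : ctil ≤ Ctil)
    (A : Matrix (Fin n) (Fin n) ℝ) (hAsymm : A.IsSymm)
    (hAlb : ∀ x : Fin n → ℝ, ctil * (x ⬝ᵥ x) ≤ x ⬝ᵥ (A *ᵥ x))
    (hAub : ∀ x : Fin n → ℝ, x ⬝ᵥ (A *ᵥ x) ≤ Ctil * (x ⬝ᵥ x))
    (d : ℕ → ℝ)
    (hd : ∀ l ∈ Finset.Icc k₁ k₂, 0 ≤ d l ∧ d l ≤ Ctil)
    (hdk₁ : ctil ≤ d k₁) (hdk₂ : ctil ≤ d k₂)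
    (K : EuclideanSpace ℝ (Fin n) → ℝ)
    (hK : ∀ z : EuclideanSpace ℝ (Fin n),
      K z = ∑ l ∈ Finset.Icc k₁ k₂, d l * ((fun i => z i) ⬝ᵥ (A *ᵥ fun i => z i)) ^ l) :
    ∃ c > (0 : ℝ), ∃ M : ℝ, 0 ≤ M ∧ ∀ z, c * K z ≤ ‖gradient K z‖ ^ 2 + M :=
  poly_kinetic_energy_coercivity_general n k₁ k₂ hk₁ hk₁₂ ctil Ctil hc A hAlb d hd hdk₁ K hK
end
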